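/- arXiv:0912.3358 — 2 statements merged into one kernel-verified Lean document; each statement's English description precedes it below -/
import Mathlib

section
/- Let 1 < p < ∞, let 𝒳 be a Banach space, and let (Ω,ℱ,μ) be a divisible measure space with μ(Ω) = 1. If there is a constant C such that 𝒳 has RMF_p with constant C with respect to every dyadic Haar filtration on (Ω,ℱ,μ), then 𝒳 has RMF_p with constant C with respect to every Haar filtration on (Ω,ℱ,μ). -/
open MeasureTheory Finset Set
open scoped ENNReal NNReal

noncomputable section

namespace RMF

open scoped Classical

universe u

/-- The average `2^{-N} ∑_{ε ∈ {-1,1}^N} ‖∑ⱼ εⱼ • xⱼ‖²` over all choices of signs. -/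
def radAvg {E : Type*} [NormedAddCommGroup E] [NormedSpace ℝ E] {N : ℕ}
    (x : Fin N → E) : ℝ :=
  (2 ^ N : ℝ)⁻¹ * ∑ ε : Fin N → Bool, ‖∑ j, (if ε j then (1 : ℝ) else -1) • x j‖ ^ 2

/-- `E` has type `p`. -/
def HasType (E : Type*) [NormedAddCommGroup E] [NormedSpace ℝ E] (p : ℝ) : Prop :=
  ∃ C : ℝ, 0 ≤ C ∧ ∀ (N : ℕ) (x : Fin N → E),
    Real.sqrt (radAvg x) ≤ C * (∑ j, ‖x j‖ ^ p) ^ (1 / p)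

/-- `E` has cotype `q`. -/
def HasCotype (E : Type*) [NormedAddCommGroup E] [NormedSpace ℝ E] (q : ℝ) : Prop :=
  ∃ C : ℝ, 0 ≤ C ∧ ∀ (N : ℕ) (x : Fin N → E),
    (∑ j, ‖x j‖ ^ q) ^ (1 / q) ≤ C * Real.sqrt (radAvg x)

/-- `C` is an R-bound for the set `S` of vectors (scalar test sequences). -/
def IsRBound {𝒳 : Type*} [NormedAddCommGroup 𝒳] [NormedSpace ℝ 𝒳]
    (S : Set 𝒳) (C : ℝ) : Prop :=
  0 ≤ C ∧ ∀ (N : ℕ) (y : Fin N → 𝒳) (l : Fin N → ℝ), (∀ j, y j ∈ S) →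
    radAvg (fun j => l j • y j) ≤ C ^ 2 * radAvg l

/-- The R-bound `𝓡(S) ∈ [0,∞]` of a set of vectors. -/
def Rbound {𝒳 : Type*} [NormedAddCommGroup 𝒳] [NormedSpace ℝ 𝒳] (S : Set 𝒳) : ℝ≥0∞ :=
  sInf {c : ℝ≥0∞ | ∃ r : ℝ, IsRBound S r ∧ c = ENNReal.ofReal r}

/-- `C` is an R-bound for the family `S` of operators. -/
def IsRBoundOp {H E : Type*} [NormedAddCommGroup H] [NormedSpace ℝ H]
    [NormedAddCommGroup E] [NormedSpace ℝ E] (S : Set (H →L[ℝ] E)) (C : ℝ) : Prop :=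
  0 ≤ C ∧ ∀ (N : ℕ) (T : Fin N → H →L[ℝ] E) (x : Fin N → H), (∀ j, T j ∈ S) →
    radAvg (fun j => T j (x j)) ≤ C ^ 2 * radAvg x

/-- The R-bound `𝓡(S) ∈ [0,∞]` of a family of operators. -/
def RboundOp {H E : Type*} [NormedAddCommGroup H] [NormedSpace ℝ H]
    [NormedAddCommGroup E] [NormedSpace ℝ E] (S : Set (H →L[ℝ] E)) : ℝ≥0∞ :=
  sInf {c : ℝ≥0∞ | ∃ r : ℝ, IsRBoundOp S r ∧ c = ENNReal.ofReal r}

/-- The average of `f` over the standard dyadic interval of generation `j` containing `ξ`. -/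
def dyAvg {𝒳 : Type*} [NormedAddCommGroup 𝒳] [NormedSpace ℝ 𝒳] (f : ℝ → 𝒳) (j : ℤ)
    (ξ : ℝ) : 𝒳 :=
  ((2 : ℝ) ^ j) • ∫ t in Set.Ico ((⌊(2 : ℝ) ^ j * ξ⌋ : ℝ) / (2 : ℝ) ^ j)
      (((⌊(2 : ℝ) ^ j * ξ⌋ : ℝ) + 1) / (2 : ℝ) ^ j), f t

/-- The standard dyadic cube of generation `j` containing `ξ` in `ℝⁿ`. -/
def dyCube (n : ℕ) (j : ℤ) (ξ : Fin n → ℝ) : Set (Fin n → ℝ) :=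
  {η | ∀ i, ⌊(2 : ℝ) ^ j * η i⌋ = ⌊(2 : ℝ) ^ j * ξ i⌋}

/-- The average of `f` over the standard dyadic cube of generation `j` containing `ξ`. -/
def cubeAvg {n : ℕ} {𝒳 : Type*} [NormedAddCommGroup 𝒳] [NormedSpace ℝ 𝒳]
    (f : (Fin n → ℝ) → 𝒳) (j : ℤ) (ξ : Fin n → ℝ) : 𝒳 :=
  ((2 : ℝ) ^ (j * (n : ℤ))) • ∫ η in dyCube n j ξ, f η

/-- The Rademacher maximal function w.r.t. the standard dyadic cubes in `ℝⁿ`. -/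
def MRcube {n : ℕ} {𝒳 : Type*} [NormedAddCommGroup 𝒳] [NormedSpace ℝ 𝒳]
    (f : (Fin n → ℝ) → 𝒳) (ξ : Fin n → ℝ) : ℝ≥0∞ :=
  Rbound {y : 𝒳 | ∃ j : ℤ, y = cubeAvg f j ξ}

/-- The Rademacher maximal function w.r.t. the dyadic intervals of `[0,1)`. -/
def MRdyadic01 {𝒳 : Type*} [NormedAddCommGroup 𝒳] [NormedSpace ℝ 𝒳]
    (f : ℝ → 𝒳) (ξ : ℝ) : ℝ≥0∞ :=
  Rbound {y : 𝒳 | ∃ j : ℕ, y = dyAvg f (j : ℤ) ξ}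

/-- The operator-valued Rademacher maximal function w.r.t. the standard dyadic
intervals on `ℝ`. -/
def MRlineOp {H E : Type*} [NormedAddCommGroup H] [NormedSpace ℝ H]
    [NormedAddCommGroup E] [NormedSpace ℝ E] (f : ℝ → (H →L[ℝ] E)) (ξ : ℝ) : ℝ≥0∞ :=
  RboundOp {T : H →L[ℝ] E | ∃ j : ℤ, T = dyAvg f j ξ}

/-- The operator-valued Rademacher maximal function w.r.t. the dyadic intervals
of `[0,1)`. -/
def MRdyadic01Op {H E : Type*} [NormedAddCommGroup H] [NormedSpace ℝ H]
    [NormedAddCommGroup E] [NormedSpace ℝ E] (f : ℝ → (H →L[ℝ] E)) (ξ : ℝ) : ℝ≥0∞ :=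
  RboundOp {T : H →L[ℝ] E | ∃ j : ℕ, T = dyAvg f (j : ℤ) ξ}

/-- The Rademacher maximal function w.r.t. a family of sub-σ-algebras. -/
def MRfilt {𝒳 : Type*} [NormedAddCommGroup 𝒳] [NormedSpace ℝ 𝒳] [CompleteSpace 𝒳]
    {Ω ι : Type*} [m0 : MeasurableSpace Ω] (μ : Measure Ω) (m : ι → MeasurableSpace Ω)
    (f : Ω → 𝒳) (ξ : Ω) : ℝ≥0∞ :=
  Rbound {y : 𝒳 | ∃ j : ι, y = (μ[f| m j]) ξ}

/-- `𝒳` has `RMF_p` with constant `C` w.r.t. the family `m` of sub-σ-algebras on `(Ω, μ)`. -/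
def RMFpWith (𝒳 : Type*) [NormedAddCommGroup 𝒳] [NormedSpace ℝ 𝒳] [CompleteSpace 𝒳]
    (p C : ℝ) {Ω ι : Type*} [m0 : MeasurableSpace Ω] (μ : Measure Ω)
    (m : ι → MeasurableSpace Ω) : Prop :=
  ∀ f : Ω → 𝒳, MemLp f (ENNReal.ofReal p) μ →
    (∫⁻ ξ, MRfilt μ m f ξ ^ p ∂μ) ^ (1 / p) ≤
      ENNReal.ofReal C * eLpNorm f (ENNReal.ofReal p) μ

/-- A measure is divisible if any set of positive measure contains subsets of any
prescribed fraction of its measure. -/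
def Divisible {Ω : Type*} [MeasurableSpace Ω] (μ : Measure Ω) : Prop :=
  ∀ A : Set Ω, MeasurableSet A → 0 < μ A → ∀ c : ℝ, 0 < c → c < 1 →
    ∃ B : Set Ω, MeasurableSet B ∧ B ⊆ A ∧ μ B = ENNReal.ofReal c * μ A

/-- A Haar filtration on `(Ω, μ)`: `part j` is the generating partition of the
`(j+1)`-st σ-algebra of the filtration (so it has `j + 2` members), and each
partition arises from the previous one by splitting the set `splitSet j` into the
two pieces `piece1 j` and `piece2 j` of positive measure; `part 0` itself arises by
splitting `Ω` in two. -/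
structure HaarSystem (Ω : Type*) [m0 : MeasurableSpace Ω] (μ : Measure Ω) where
  part : ℕ → Finset (Set Ω)
  card_part : ∀ j, (part j).card = j + 2
  meas : ∀ j, ∀ A ∈ part j, MeasurableSet A
  disj : ∀ j, ∀ A ∈ part j, ∀ B ∈ part j, A ≠ B → Disjoint A B
  cover : ∀ j, ⋃₀ (↑(part j) : Set (Set Ω)) = Set.univ
  pos : ∀ j, ∀ A ∈ part j, 0 < μ A
  splitSet : ℕ → Set Ω
  piece1 : ℕ → Set Ω
  piece2 : ℕ → Set Ω
  splitSet_mem : ∀ j, splitSet j ∈ part j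
  union_pieces : ∀ j, piece1 j ∪ piece2 j = splitSet j
  disj_pieces : ∀ j, Disjoint (piece1 j) (piece2 j)
  part_succ : ∀ j, part (j + 1) =
    insert (piece1 j) (insert (piece2 j) ((part j).erase (splitSet j)))

/-- The σ-algebras of a Haar filtration. -/
def HaarSystem.salg {Ω : Type*} [m0 : MeasurableSpace Ω] {μ : Measure Ω}
    (S : HaarSystem Ω μ) (j : ℕ) : MeasurableSpace Ω :=
  MeasurableSpace.generateFrom (↑(S.part j) : Set (Set Ω))

/-- A Haar filtration is dyadic if in each splitting the measure of each piece is a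
dyadic fraction of the measure of the split set. -/
def HaarSystem.IsDyadic {Ω : Type*} [m0 : MeasurableSpace Ω] {μ : Measure Ω}
    (S : HaarSystem Ω μ) : Prop :=
  (∀ A ∈ S.part 0, ∃ m k : ℕ, μ A = (m : ℝ≥0∞) / 2 ^ k * μ Set.univ) ∧
  ∀ j, ∃ m k : ℕ, μ (S.piece1 j) = (m : ℝ≥0∞) / 2 ^ k * μ (S.splitSet j)

/-- A Haar filtration is standard if each splitting is into two pieces of equal measure. -/
def HaarSystem.IsStandard {Ω : Type*} [m0 : MeasurableSpace Ω] {μ : Measure Ω}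
    (S : HaarSystem Ω μ) : Prop :=
  (∀ A ∈ S.part 0, μ A = μ Set.univ / 2) ∧
  ∀ j, μ (S.piece1 j) = μ (S.splitSet j) / 2

/-- A filtration of finite sub-σ-algebras, given by finite generating partitions
into sets of positive measure. -/
structure PartitionFiltration (Ω : Type*) [m0 : MeasurableSpace Ω] (μ : Measure Ω) where
  part : ℕ → Finset (Set Ω)
  meas : ∀ j, ∀ A ∈ part j, MeasurableSet A
  disj : ∀ j, ∀ A ∈ part j, ∀ B ∈ part j, A ≠ B → Disjoint A B
  cover : ∀ j, ⋃₀ (↑(part j) : Set (Set Ω)) = Set.univ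
  pos : ∀ j, ∀ A ∈ part j, 0 < μ A
  mono : ∀ j, MeasurableSpace.generateFrom (↑(part j) : Set (Set Ω)) ≤
    MeasurableSpace.generateFrom (↑(part (j + 1)) : Set (Set Ω))

/-- The natural σ-algebra `σ(X_1, …, X_j)` of a process. -/
def natSig {𝒳 Ω : Type*} [NormedAddCommGroup 𝒳] (X : ℕ → Ω → 𝒳) (j : ℕ) :
    MeasurableSpace Ω :=
  ⨆ i ∈ Set.Icc 1 j, MeasurableSpace.comap (X i) (borel 𝒳)

/-- `(X_j)_{j ≥ 1}` is a martingale (w.r.t. its natural filtration). -/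
def IsMart {𝒳 : Type*} [NormedAddCommGroup 𝒳] [NormedSpace ℝ 𝒳] [CompleteSpace 𝒳]
    {Ω : Type*} [m0 : MeasurableSpace Ω] (μ : Measure Ω) (X : ℕ → Ω → 𝒳) : Prop :=
  (∀ j, 1 ≤ j → Integrable (X j) μ) ∧ (∀ j, 1 ≤ j → natSig X j ≤ m0) ∧
  ∀ j k, 1 ≤ j → j ≤ k → (μ[X k| natSig X j]) =ᵐ[μ] X j

/-- `‖X‖_p = sup_{j ≥ 1} (𝔼 ‖X_j‖^p)^{1/p}`. -/
def martNorm {𝒳 : Type*} [NormedAddCommGroup 𝒳] {Ω : Type*} [m0 : MeasurableSpace Ω]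
    (μ : Measure Ω) (X : ℕ → Ω → 𝒳) (p : ℝ≥0∞) : ℝ≥0∞ :=
  ⨆ j, ⨆ (_ : 1 ≤ j), eLpNorm (X j) p μ

/-- The Rademacher maximal function `X_R^* = 𝓡({X_j : j ≥ 1})` of a process. -/
def martR {𝒳 : Type*} [NormedAddCommGroup 𝒳] [NormedSpace ℝ 𝒳] {Ω : Type*}
    (X : ℕ → Ω → 𝒳) (ω : Ω) : ℝ≥0∞ :=
  Rbound {y : 𝒳 | ∃ j, 1 ≤ j ∧ y = X j ω}

/-- Doob's maximal function `X^* = sup_{j ≥ 1} ‖X_j‖` of a process. -/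
def martStar {𝒳 : Type*} [NormedAddCommGroup 𝒳] {Ω : Type*}
    (X : ℕ → Ω → 𝒳) (ω : Ω) : ℝ≥0∞ :=
  ⨆ j, ⨆ (_ : 1 ≤ j), (‖X j ω‖₊ : ℝ≥0∞)

/-- `𝒳` has weak RMF with constant `C`: every `L¹`-bounded martingale `X` in `𝒳`
satisfies `ℙ(X_R^* > λ) ≤ (C/λ) ‖X‖₁`. -/
def WeakRMFConst (𝒳 : Type*) [NormedAddCommGroup 𝒳] [NormedSpace ℝ 𝒳]
    [CompleteSpace 𝒳] (C : ℝ) : Prop :=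
  ∀ (Ω : Type u) (m0 : MeasurableSpace Ω) (μ : Measure Ω), IsProbabilityMeasure μ →
    ∀ X : ℕ → Ω → 𝒳, IsMart μ X → martNorm μ X 1 < ⊤ →
      ∀ lam : ℝ, 0 < lam →
        μ {ω | ENNReal.ofReal lam < martR X ω} ≤
          ENNReal.ofReal (C / lam) * martNorm μ X 1

/-- A standard Haar martingale: a martingale whose natural filtration is a standard
Haar filtration. -/
def IsStdHaarMart {𝒳 : Type*} [NormedAddCommGroup 𝒳] [NormedSpace ℝ 𝒳] [CompleteSpace 𝒳]
    {Ω : Type*} [m0 : MeasurableSpace Ω] (μ : Measure Ω) (X : ℕ → Ω → 𝒳) : Prop :=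
  IsMart μ X ∧ ∃ S : HaarSystem Ω μ, S.IsStandard ∧
    ∀ j, 1 ≤ j → natSig X j = S.salg (j - 1)

/-- A finite martingale `(X_j)_{j=1}^N`. -/
def IsFinMart {𝒳 : Type*} [NormedAddCommGroup 𝒳] [NormedSpace ℝ 𝒳] [CompleteSpace 𝒳]
    {Ω : Type*} [m0 : MeasurableSpace Ω] (μ : Measure Ω) (X : ℕ → Ω → 𝒳) (N : ℕ) : Prop :=
  (∀ j, 1 ≤ j → j ≤ N → Integrable (X j) μ) ∧
  (∀ j, 1 ≤ j → j ≤ N → natSig X j ≤ m0) ∧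
  ∀ j k, 1 ≤ j → j ≤ k → k ≤ N → (μ[X k| natSig X j]) =ᵐ[μ] X j

/-- A simple martingale `(X_j)_{j=1}^N`: a finite martingale all of whose random
variables take finitely many values. -/
def IsSimpleMart {𝒳 : Type*} [NormedAddCommGroup 𝒳] [NormedSpace ℝ 𝒳] [CompleteSpace 𝒳]
    {Ω : Type*} [m0 : MeasurableSpace Ω] (μ : Measure Ω) (X : ℕ → Ω → 𝒳) (N : ℕ) : Prop :=
  IsFinMart μ X N ∧ ∀ j, 1 ≤ j → j ≤ N → (Set.range (X j)).Finite

/-- The (finite) set `{X_1(ω), …, X_k(ω)}`. -/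
def martSet {𝒳 Ω : Type*} [DecidableEq 𝒳] (X : ℕ → Ω → 𝒳) (k : ℕ) (ω : Ω) : Finset 𝒳 :=
  (Finset.Icc 1 k).image fun i => X i ω

/-! ### Auxiliary lemmas on `radAvg` and `Rbound` -/

section RboundLemmas

variable {𝒳 : Type*} [NormedAddCommGroup 𝒳] [NormedSpace ℝ 𝒳]

lemma radAvg_nonneg {E : Type*} [NormedAddCommGroup E] [NormedSpace ℝ E] {N : ℕ}
    (x : Fin N → E) : 0 ≤ radAvg x := by
  unfold radAvg
  apply mul_nonneg (by positivity)
  exact Finset.sum_nonneg fun _ _ => by positivity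

lemma isRBound_mono_const {S : Set 𝒳} {r r' : ℝ} (h : IsRBound S r) (hrr : r ≤ r') :
    IsRBound S r' := by
  refine ⟨h.1.trans hrr, fun N y l hy => (h.2 N y l hy).trans ?_⟩
  exact mul_le_mul_of_nonneg_right (pow_le_pow_left₀ h.1 hrr 2) (radAvg_nonneg l)

lemma isRBound_of_subset {S T : Set 𝒳} {r : ℝ} (hST : S ⊆ T) (h : IsRBound T r) :
    IsRBound S r :=
  ⟨h.1, fun N y l hy => h.2 N y l fun j => hST (hy j)⟩

lemma Rbound_le_ofReal {S : Set 𝒳} {r : ℝ} (h : IsRBound S r) :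
    Rbound S ≤ ENNReal.ofReal r :=
  sInf_le ⟨r, h, rfl⟩

lemma Rbound_mono {S T : Set 𝒳} (hST : S ⊆ T) : Rbound S ≤ Rbound T := by
  apply sInf_le_sInf
  rintro c ⟨r, hr, rfl⟩
  exact ⟨r, isRBound_of_subset hST hr, rfl⟩

lemma Rbound_le_of_forall_isRBound {S : Set 𝒳} {L : ℝ≥0∞}
    (h : ∀ r : ℝ, 0 < r → L < ENNReal.ofReal r → IsRBound S r) : Rbound S ≤ L := by
  by_contra hlt
  obtain ⟨r, hr0, hLr, hrR⟩ := ENNReal.lt_iff_exists_real_btwn.mp (lt_of_not_ge hlt)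
  have hrpos : 0 < r := ENNReal.ofReal_pos.mp ((zero_le : (0:ℝ≥0∞) ≤ L).trans_lt hLr)
  exact absurd (Rbound_le_ofReal (h r hrpos hLr)) (not_le.mpr hrR)

lemma isRBound_of_Rbound_lt {S : Set 𝒳} {r : ℝ} (hr : Rbound S < ENNReal.ofReal r) :
    IsRBound S r := by
  obtain ⟨c, hc, hlt⟩ := sInf_lt_iff.mp hr
  obtain ⟨r', h', rfl⟩ := hc
  refine isRBound_mono_const h' ?_
  by_contra h''
  push_neg at h''
  exact absurd hlt (not_lt.mpr (ENNReal.ofReal_le_ofReal h''.le))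

lemma radAvg_tendsto {E : Type*} [NormedAddCommGroup E] [NormedSpace ℝ E] {N : ℕ}
    (z : ℕ → Fin N → E) (y : Fin N → E)
    (h : ∀ i, Filter.Tendsto (fun k => z k i) Filter.atTop (nhds (y i))) :
    Filter.Tendsto (fun k => radAvg (z k)) Filter.atTop (nhds (radAvg y)) := by
  unfold radAvg
  apply Filter.Tendsto.const_mul
  apply tendsto_finset_sum
  intro ε _
  have h1 : Filter.Tendsto (fun k => ∑ j, (if ε j then (1 : ℝ) else -1) • z k j)
      Filter.atTop (nhds (∑ j, (if ε j then (1 : ℝ) else -1) • y j)) :=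
    tendsto_finset_sum _ fun j _ => (h j).const_smul _
  exact h1.norm.pow 2

/-- Sequential lower semicontinuity of `Rbound` for finite tuples. -/
lemma Rbound_le_liminf {N : ℕ} (y : Fin N → 𝒳) (z : ℕ → Fin N → 𝒳)
    (h : ∀ i, Filter.Tendsto (fun k => z k i) Filter.atTop (nhds (y i))) :
    Rbound {x | ∃ i, x = y i} ≤
      Filter.liminf (fun k => Rbound {x | ∃ i, x = z k i}) Filter.atTop := by
  apply Rbound_le_of_forall_isRBound
  intro r hrpos hlt
  have hfreq : ∃ᶠ k in Filter.atTop, Rbound {x | ∃ i, x = z k i} < ENNReal.ofReal r :=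
    Filter.frequently_lt_of_liminf_lt (by isBoundedDefault) hlt
  refine ⟨hrpos.le, ?_⟩
  intro M ysel l hmem
  choose sel hsel using hmem
  have htend : Filter.Tendsto (fun k => radAvg (fun j => l j • z k (sel j)))
      Filter.atTop (nhds (radAvg fun j => l j • ysel j)) := by
    apply radAvg_tendsto
    intro j
    rw [hsel j]
    exact (h (sel j)).const_smul _
  have hfr2 : ∃ᶠ k in Filter.atTop,
      radAvg (fun j => l j • z k (sel j)) ≤ r ^ 2 * radAvg l := by
    refine hfreq.mono fun k hk => ?_
    exact (isRBound_of_Rbound_lt hk).2 M (fun j => z k (sel j)) l fun j => ⟨sel j, rfl⟩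
  by_contra hcon
  push_neg at hcon
  have hev : ∀ᶠ k in Filter.atTop,
      r ^ 2 * radAvg l < radAvg (fun j => l j • z k (sel j)) :=
    htend.eventually (Filter.eventually_iff.mpr (Ioi_mem_nhds hcon))
  obtain ⟨k, hk1, hk2⟩ := (hfr2.and_eventually hev).exists
  exact absurd hk1 (not_le.mpr hk2)

end RboundLemmas

section MRfiltLemmas

variable {𝒳 : Type*} [NormedAddCommGroup 𝒳] [NormedSpace ℝ 𝒳] [CompleteSpace 𝒳]
variable {Ω : Type*} [m0 : MeasurableSpace Ω] {μ : Measure Ω}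

lemma MRfilt_eq_iSup (m : ℕ → MeasurableSpace Ω) (f : Ω → 𝒳) (ξ : Ω) :
    MRfilt μ m f ξ = ⨆ n, Rbound {y : 𝒳 | ∃ j ≤ n, y = (μ[f| m j]) ξ} := by
  apply le_antisymm
  · apply Rbound_le_of_forall_isRBound
    intro r hrpos hlt
    have hn : ∀ n, IsRBound {y : 𝒳 | ∃ j ≤ n, y = (μ[f| m j]) ξ} r := fun n =>
      isRBound_of_Rbound_lt (lt_of_le_of_lt (le_iSup (fun n => Rbound {y : 𝒳 | ∃ j ≤ n, y = (μ[f| m j]) ξ}) n) hlt)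
    refine ⟨hrpos.le, ?_⟩
    intro N y l hy
    choose i hi using hy
    exact (hn (Finset.univ.sup i)).2 N y l fun j =>
      ⟨i j, Finset.le_sup (Finset.mem_univ j), hi j⟩
  · exact iSup_le fun n => Rbound_mono fun y hy => by
      obtain ⟨j, _, hj⟩ := hy; exact ⟨j, hj⟩

end MRfiltLemmas

/-! ### Partition lemmas for Haar systems -/

section HaarPartition

variable {Ω : Type*} [m0 : MeasurableSpace Ω] {μ : Measure Ω}

lemma HaarSystem.salg_le (T : HaarSystem Ω μ) (j : ℕ) : T.salg j ≤ m0 :=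
  MeasurableSpace.generateFrom_le fun t ht => T.meas j t ht

lemma HaarSystem.exists_mem_cell (T : HaarSystem Ω μ) (j : ℕ) (ξ : Ω) :
    ∃ B ∈ T.part j, ξ ∈ B := by
  have : ξ ∈ ⋃₀ (↑(T.part j) : Set (Set Ω)) := by rw [T.cover j]; trivial
  obtain ⟨B, hB, hξ⟩ := this
  exact ⟨B, hB, hξ⟩

lemma HaarSystem.cell_unique (T : HaarSystem Ω μ) {j : ℕ} {B B' : Set Ω} {ξ : Ω}
    (hB : B ∈ T.part j) (hB' : B' ∈ T.part j) (hξ : ξ ∈ B) (hξ' : ξ ∈ B') : B = B' := by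
  by_contra hne
  exact (T.disj j B hB B' hB' hne).le_bot ⟨hξ, hξ'⟩

/-- Every set measurable w.r.t. the σ-algebra generated by a finite partition is a
finite union of cells. -/
lemma partition_salg_structure {Ω : Type*} (P : Finset (Set Ω))
    (hcover : ⋃₀ (↑P : Set (Set Ω)) = Set.univ)
    (hdisj : ∀ A ∈ P, ∀ B ∈ P, A ≠ B → Disjoint A B) (s : Set Ω)
    (hs : MeasurableSet[MeasurableSpace.generateFrom (↑P : Set (Set Ω))] s) :
    ∃ F : Finset (Set Ω), F ⊆ P ∧ s = ⋃₀ (↑F : Set (Set Ω)) := by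
  have hcell : ∀ x : Ω, ∃ B ∈ P, x ∈ B := by
    intro x
    have : x ∈ ⋃₀ (↑P : Set (Set Ω)) := by rw [hcover]; trivial
    obtain ⟨B, hB, hx⟩ := this
    exact ⟨B, hB, hx⟩
  let m' : MeasurableSpace Ω :=
    { MeasurableSet' := fun s => ∃ F : Finset (Set Ω), F ⊆ P ∧ s = ⋃₀ (↑F : Set (Set Ω))
      measurableSet_empty := ⟨∅, by simp, by simp⟩
      measurableSet_compl := by
        rintro s ⟨F, hF, rfl⟩
        refine ⟨P \ F, Finset.sdiff_subset, ?_⟩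
        ext x
        constructor
        · intro hx
          obtain ⟨B, hB, hxB⟩ := hcell x
          have hBF : B ∉ F := fun hBF => hx ⟨B, hBF, hxB⟩
          exact ⟨B, Finset.mem_sdiff.mpr ⟨hB, hBF⟩, hxB⟩
        · rintro ⟨B, hB, hxB⟩ ⟨B', hB', hxB'⟩
          rw [Finset.mem_coe, Finset.mem_sdiff] at hB
          have hne : B ≠ B' := fun he => hB.2 (he ▸ hB')
          exact (hdisj B hB.1 B' (hF hB') hne).le_bot ⟨hxB, hxB'⟩
      measurableSet_iUnion := by
        intro g hg
        choose F hF hFe using hg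
        refine ⟨P.filter (fun B => ∃ i, B ∈ F i), Finset.filter_subset _ _, ?_⟩
        ext x
        simp only [Set.mem_iUnion, Set.mem_sUnion, Finset.mem_coe, Finset.mem_filter]
        constructor
        · rintro ⟨i, hi⟩
          rw [hFe i] at hi
          obtain ⟨B, hB, hxB⟩ := hi
          exact ⟨B, ⟨hF i hB, i, hB⟩, hxB⟩
        · rintro ⟨B, ⟨_, i, hBi⟩, hxB⟩
          exact ⟨i, by rw [hFe i]; exact ⟨B, hBi, hxB⟩⟩ }
  have hle : MeasurableSpace.generateFrom (↑P : Set (Set Ω)) ≤ m' := by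
    apply MeasurableSpace.generateFrom_le
    intro t ht
    exact show m'.MeasurableSet' t from ⟨{t}, by simpa using ht, by simp⟩
  exact hle s hs

/-- Every set measurable w.r.t. `T.salg j` is a finite union of cells. -/
lemma HaarSystem.salg_structure (T : HaarSystem Ω μ) (j : ℕ) (s : Set Ω)
    (hs : MeasurableSet[T.salg j] s) :
    ∃ F : Finset (Set Ω), F ⊆ T.part j ∧ s = ⋃₀ (↑F : Set (Set Ω)) :=
  partition_salg_structure (T.part j) (T.cover j) (T.disj j) s hs

lemma HaarSystem.step_refines (T : HaarSystem Ω μ) (k : ℕ) {A : Set Ω}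
    (hA : A ∈ T.part (k + 1)) : ∃ B ∈ T.part k, A ⊆ B := by
  rw [T.part_succ k] at hA
  rcases Finset.mem_insert.mp hA with h1 | hA
  · exact ⟨T.splitSet k, T.splitSet_mem k, by
      rw [h1, ← T.union_pieces k]; exact Set.subset_union_left⟩
  rcases Finset.mem_insert.mp hA with h2 | hA
  · exact ⟨T.splitSet k, T.splitSet_mem k, by
      rw [h2, ← T.union_pieces k]; exact Set.subset_union_right⟩
  · exact ⟨A, Finset.mem_of_mem_erase hA, subset_rfl⟩

lemma HaarSystem.refines (T : HaarSystem Ω μ) {j k : ℕ} (hjk : j ≤ k) {A : Set Ω}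
    (hA : A ∈ T.part k) : ∃ B ∈ T.part j, A ⊆ B := by
  induction k, hjk using Nat.le_induction generalizing A with
  | base => exact ⟨A, hA, subset_rfl⟩
  | succ k hk ih =>
    obtain ⟨B, hB, hAB⟩ := T.step_refines k hA
    obtain ⟨B', hB', hBB'⟩ := ih hB
    exact ⟨B', hB', hAB.trans hBB'⟩

/-- A function constant on each cell of `T.part n` is measurable. -/
lemma HaarSystem.measurable_of_cellConst (T : HaarSystem Ω μ) (n : ℕ) {β : Type*}
    [MeasurableSpace β] (g : Ω → β)
    (hg : ∀ A ∈ T.part n, ∀ ξ ∈ A, ∀ ξ' ∈ A, g ξ = g ξ') : Measurable g := by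
  intro E _
  have : g ⁻¹' E = ⋃₀ {A : Set Ω | A ∈ T.part n ∧ A ⊆ g ⁻¹' E} := by
    ext ξ
    constructor
    · intro hξ
      obtain ⟨B, hB, hξB⟩ := T.exists_mem_cell n ξ
      refine ⟨B, ⟨hB, fun ξ' hξ' => ?_⟩, hξB⟩
      show g ξ' ∈ E
      rw [← hg B hB ξ hξB ξ' hξ']
      exact hξ
    · rintro ⟨B, ⟨_, hBE⟩, hξB⟩
      exact hBE hξB
  rw [this]
  apply MeasurableSet.sUnion
  · exact ((T.part n : Set (Set Ω)).to_countable).mono fun A hA => hA.1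
  · rintro A ⟨hA, _⟩
    exact T.meas n A hA
end HaarPartition

/-! ### The explicit conditional expectation w.r.t. a Haar filtration -/

section HaarCE

variable {𝒳 : Type*} [NormedAddCommGroup 𝒳] [NormedSpace ℝ 𝒳] [CompleteSpace 𝒳]
variable {Ω : Type*} [m0 : MeasurableSpace Ω] {μ : Measure Ω} [IsProbabilityMeasure μ]

/-- The explicit cell-average representative of the conditional expectation. -/
def haarCE (T : HaarSystem Ω μ) (f : Ω → 𝒳) (j : ℕ) : Ω → 𝒳 := fun ξ =>
  ∑ B ∈ T.part j, Set.indicator B (fun _ => (μ B).toReal⁻¹ • ∫ x in B, f x ∂μ) ξ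

lemma haarCE_eq_avg (T : HaarSystem Ω μ) (f : Ω → 𝒳) {j : ℕ} {B : Set Ω} {ξ : Ω}
    (hB : B ∈ T.part j) (hξ : ξ ∈ B) :
    haarCE T f j ξ = (μ B).toReal⁻¹ • ∫ x in B, f x ∂μ := by
  unfold haarCE
  rw [Finset.sum_eq_single_of_mem B hB]
  · exact Set.indicator_of_mem hξ _
  · intro B' hB' hne
    apply Set.indicator_of_notMem
    intro hξ'
    exact (T.disj j B' hB' B hB hne).le_bot ⟨hξ', hξ⟩

lemma integrableOn_haarCE (T : HaarSystem Ω μ) (f : Ω → 𝒳) (j : ℕ) :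
    Integrable (haarCE T f j) μ := by
  apply integrable_finset_sum
  intro B hB
  exact (integrable_const _).indicator (T.meas j B hB)

lemma setIntegral_haarCE (T : HaarSystem Ω μ) (f : Ω → 𝒳) (hf : Integrable f μ)
    {j : ℕ} {B : Set Ω} (hB : B ∈ T.part j) :
    ∫ x in B, haarCE T f j x ∂μ = ∫ x in B, f x ∂μ := by
  have hmeasB := T.meas j B hB
  have h1 : ∫ x in B, haarCE T f j x ∂μ =
      ∑ B' ∈ T.part j, ∫ x in B,
        Set.indicator B' (fun _ => (μ B').toReal⁻¹ • ∫ y in B', f y ∂μ) x ∂μ := by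
    apply integral_finset_sum
    intro B' hB'
    exact ((integrable_const _).indicator (T.meas j B' hB')).integrableOn
  rw [h1]
  rw [Finset.sum_eq_single_of_mem B hB]
  · rw [integral_indicator_const _ (T.meas j B hB), measureReal_restrict_apply (T.meas j B hB),
      Set.inter_self, measureReal_def, smul_smul, mul_inv_cancel₀, one_smul]
    exact ENNReal.toReal_ne_zero.mpr ⟨(T.pos j B hB).ne', measure_ne_top μ B⟩
  · intro B' hB' hne
    rw [integral_indicator_const _ (T.meas j B' hB'), measureReal_restrict_apply (T.meas j B' hB')]
    have : B' ∩ B = ∅ := Set.disjoint_iff_inter_eq_empty.mp (T.disj j B' hB' B hB hne)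
    rw [this]
    simp

/-- The conditional expectation w.r.t. a Haar filtration is the cell-average function. -/
lemma condexp_haar_ae (T : HaarSystem Ω μ) (f : Ω → 𝒳) (hf : Integrable f μ) (j : ℕ) :
    (μ[f| T.salg j]) =ᵐ[μ] haarCE T f j := by
  symm
  refine ae_eq_condExp_of_forall_setIntegral_eq (T.salg_le j) hf ?_ ?_ ?_
  · exact fun s _ _ => (integrableOn_haarCE T f j).integrableOn
  · intro s hs _
    obtain ⟨F, hF, rfl⟩ := T.salg_structure j s hs
    have hmeas : ∀ B ∈ F, MeasurableSet B := fun B hB => T.meas j B (hF hB)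
    have hdisj : (↑F : Set (Set Ω)).Pairwise (Function.onFun Disjoint fun B : Set Ω => B) :=
      fun B hB B' hB' hne => T.disj j B (hF hB) B' (hF hB') hne
    have hrw : ⋃₀ (↑F : Set (Set Ω)) = ⋃ B ∈ F, B := by
      rw [Set.sUnion_eq_biUnion]; simp only [Finset.mem_coe]
    rw [hrw,
      integral_biUnion_finset F hmeas hdisj
        (fun B hB => (integrableOn_haarCE T f j).integrableOn),
      integral_biUnion_finset F hmeas hdisj (fun B hB => hf.integrableOn)]
    exact Finset.sum_congr rfl fun B hB => setIntegral_haarCE T f hf (hF hB)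
  · apply MeasureTheory.StronglyMeasurable.aestronglyMeasurable
    apply Finset.stronglyMeasurable_fun_sum
    intro B hB
    exact (stronglyMeasurable_const : StronglyMeasurable[T.salg j] _).indicator
      (MeasurableSpace.measurableSet_generateFrom hB)

end HaarCE

/-! ### Splitting lemmas via divisibility -/

section Splitting

variable {Ω : Type*} [m0 : MeasurableSpace Ω] {μ : Measure Ω} [IsProbabilityMeasure μ]

lemma exists_dyadic_btwn {a b : ℝ} (ha : 0 ≤ a) (hab : a < b) :
    ∃ m k : ℕ, a < (m : ℝ) / 2 ^ k ∧ (m : ℝ) / 2 ^ k < b := by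
  obtain ⟨k, hk⟩ := exists_pow_lt_of_lt_one (sub_pos.mpr hab) (by norm_num : (1:ℝ)/2 < 1)
  refine ⟨⌊a * 2 ^ k⌋₊ + 1, k, ?_, ?_⟩
  · rw [lt_div_iff₀ (by positivity)]
    push_cast
    exact Nat.lt_floor_add_one (a * 2 ^ k)
  · rw [div_lt_iff₀ (by positivity)]
    have h1 : (⌊a * 2 ^ k⌋₊ : ℝ) ≤ a * 2 ^ k := Nat.floor_le (by positivity)
    have h2 : ((1:ℝ)/2) ^ k = 1 / 2 ^ k := by rw [div_pow, one_pow]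
    rw [h2] at hk
    have h3 : (1:ℝ) < (b - a) * 2 ^ k := by
      rw [div_lt_iff₀ (by positivity)] at hk
      linarith
    push_cast
    nlinarith

lemma ofReal_dyadic (m k : ℕ) :
    ENNReal.ofReal ((m : ℝ) / 2 ^ k) = (m : ℝ≥0∞) / 2 ^ k := by
  rw [ENNReal.ofReal_div_of_pos (by positivity)]
  congr 1
  · exact ENNReal.ofReal_natCast m
  · rw [ENNReal.ofReal_pow (by norm_num)]
    norm_num

lemma split_careful (hdiv : Divisible μ) {B1 B2 D : Set Ω}
    (hmB1 : MeasurableSet B1) (hmD : MeasurableSet D)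
    (hd12 : Disjoint B1 B2) (hpos1 : 0 < μ B1)
    {e δ' : ℝ} (he : 0 ≤ e) (hδ : 0 < δ')
    (hclose : μ (symmDiff D (B1 ∪ B2)) ≤ ENNReal.ofReal e)
    (hfeas : e + δ' < (μ B1).toReal) :
    ∃ (D1 : Set Ω) (m k : ℕ), MeasurableSet D1 ∧ D1 ⊆ D ∧
      μ D1 = (m : ℝ≥0∞) / 2 ^ k * μ D ∧ (m : ℝ) / 2 ^ k < 1 ∧
      0 < μ D1 ∧ 0 < μ (D \ D1) ∧
      μ (symmDiff D1 B1) ≤ ENNReal.ofReal (e + δ') ∧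
      μ (symmDiff (D \ D1) B2) ≤ ENNReal.ofReal (2 * e + δ') := by
  have hfin : ∀ s : Set Ω, μ s ≠ ⊤ := fun s => measure_ne_top μ s
  set t := (μ (D ∩ B1)).toReal with ht_def
  set d := (μ D).toReal with hd_def
  have hB1D_sub : B1 \ D ⊆ symmDiff D (B1 ∪ B2) := by
    intro x hx
    exact Set.mem_symmDiff.mpr (Or.inr ⟨Or.inl hx.1, hx.2⟩)
  have hB1D : μ (B1 \ D) ≤ ENNReal.ofReal e := (measure_mono hB1D_sub).trans hclose
  have hB1D' : (μ (B1 \ D)).toReal ≤ e := by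
    have := ENNReal.toReal_mono ENNReal.ofReal_ne_top hB1D
    rwa [ENNReal.toReal_ofReal he] at this
  have hsplitB1 : μ (B1 ∩ D) + μ (B1 \ D) = μ B1 := measure_inter_add_diff B1 hmD
  have hB1fin : (μ (B1 ∩ D)).toReal + (μ (B1 \ D)).toReal = (μ B1).toReal := by
    rw [← ENNReal.toReal_add (hfin _) (hfin _), hsplitB1]
  have htB1 : t = (μ (B1 ∩ D)).toReal := by rw [ht_def, Set.inter_comm]
  have ht_lb : (μ B1).toReal - e ≤ t := by rw [htB1]; linarith
  have htpos : 0 < t := by linarith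
  have htd : t ≤ d :=
    ENNReal.toReal_mono (hfin _) (measure_mono Set.inter_subset_left)
  have hdpos : 0 < d := lt_of_lt_of_le htpos htd
  have hμD : μ D = ENNReal.ofReal d := (ENNReal.ofReal_toReal (hfin D)).symm
  -- choose a dyadic ratio β
  have hlo_lt : max ((t - δ') / d) (t / (2 * d)) < t / d := by
    apply max_lt
    · rw [div_lt_div_iff₀ hdpos hdpos]
      nlinarith
    · exact div_lt_div_of_pos_left htpos hdpos (by linarith)
  have hlo_nonneg : 0 ≤ max ((t - δ') / d) (t / (2 * d)) :=
    le_max_of_le_right (by positivity)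
  obtain ⟨m, k, hβlo, hβhi⟩ := exists_dyadic_btwn hlo_nonneg hlo_lt
  set β := (m : ℝ) / 2 ^ k with hβ
  have hβpos : 0 < β := lt_of_le_of_lt hlo_nonneg hβlo
  have hβd_lt_t : β * d < t := (lt_div_iff₀ hdpos).mp hβhi
  have hβd_gt : t - δ' < β * d := by
    have h := lt_of_le_of_lt (le_max_left ((t - δ') / d) (t / (2 * d))) hβlo
    rw [div_lt_iff₀ hdpos] at h
    linarith
  have hβlt1 : β < 1 := by nlinarith
  set cc := β * d / t with hcc
  have hccpos : 0 < cc := by positivity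
  have hcclt1 : cc < 1 := by rw [hcc, div_lt_one htpos]; exact hβd_lt_t
  have hμA : μ (D ∩ B1) = ENNReal.ofReal t := (ENNReal.ofReal_toReal (hfin _)).symm
  have hApos : 0 < μ (D ∩ B1) := by rw [hμA]; exact ENNReal.ofReal_pos.mpr htpos
  obtain ⟨D1, hmD1, hD1A, hμD1⟩ := hdiv (D ∩ B1) (hmD.inter hmB1) hApos cc hccpos hcclt1
  have hμD1' : μ D1 = ENNReal.ofReal (β * d) := by
    rw [hμD1, hμA, ← ENNReal.ofReal_mul hccpos.le]
    congr 1
    rw [hcc]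
    field_simp
  have hD1D : D1 ⊆ D := hD1A.trans Set.inter_subset_left
  have hD1B1 : D1 ⊆ B1 := hD1A.trans Set.inter_subset_right
  have hμB1 : μ B1 = ENNReal.ofReal (μ B1).toReal := (ENNReal.ofReal_toReal (hfin _)).symm
  have hclB1 : μ (symmDiff D1 B1) ≤ ENNReal.ofReal (e + δ') := by
    have heq : symmDiff D1 B1 = B1 \ D1 := symmDiff_of_le hD1B1
    rw [heq, measure_diff hD1B1 hmD1.nullMeasurableSet (hfin _), hμD1', hμB1,
      ← ENNReal.ofReal_sub _ (by positivity)]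
    apply ENNReal.ofReal_le_ofReal
    linarith
  refine ⟨D1, m, k, hmD1, hD1D, ?_, hβlt1, ?_, ?_, hclB1, ?_⟩
  · rw [hμD1', hμD, ← ofReal_dyadic, ← hβ, ← ENNReal.ofReal_mul hβpos.le]
  · rw [hμD1']
    exact ENNReal.ofReal_pos.mpr (by positivity)
  · have hlt : μ D1 < μ D := by
      rw [hμD1', hμD]
      exact (ENNReal.ofReal_lt_ofReal_iff hdpos).mpr (by nlinarith)
    rw [measure_diff hD1D hmD1.nullMeasurableSet (hfin _)]
    exact tsub_pos_of_lt hlt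
  · have hsub2 : symmDiff (D \ D1) B2 ⊆ symmDiff D (B1 ∪ B2) ∪ (B1 \ D1) := by
      intro x hx
      rcases Set.mem_symmDiff.mp hx with ⟨⟨hxD, hxD1⟩, hxB2⟩ | ⟨hxB2, hxnD⟩
      · by_cases hxB1 : x ∈ B1
        · exact Or.inr ⟨hxB1, hxD1⟩
        · exact Or.inl (Set.mem_symmDiff.mpr (Or.inl ⟨hxD, fun hxu => hxu.elim hxB1 hxB2⟩))
      · by_cases hxD : x ∈ D
        · have hxD1 : x ∈ D1 := by
            by_contra hcon
            exact hxnD ⟨hxD, hcon⟩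
          exact ((hd12.le_bot ⟨hD1B1 hxD1, hxB2⟩)).elim
        · exact Or.inl (Set.mem_symmDiff.mpr (Or.inr ⟨Or.inr hxB2, hxD⟩))
    have heqB1D1 : μ (B1 \ D1) ≤ ENNReal.ofReal (e + δ') := by
      rw [← symmDiff_of_le hD1B1]
      exact hclB1
    calc μ (symmDiff (D \ D1) B2) ≤ μ (symmDiff D (B1 ∪ B2) ∪ (B1 \ D1)) := measure_mono hsub2
      _ ≤ μ (symmDiff D (B1 ∪ B2)) + μ (B1 \ D1) := measure_union_le _ _
      _ ≤ ENNReal.ofReal e + ENNReal.ofReal (e + δ') := add_le_add hclose heqB1D1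
      _ = ENNReal.ofReal (2 * e + δ') := by
          rw [← ENNReal.ofReal_add he (by linarith)]
          ring_nf

lemma split_half (hdiv : Divisible μ) {D : Set Ω} (hmD : MeasurableSet D)
    (hpos : 0 < μ D) :
    ∃ D1 : Set Ω, MeasurableSet D1 ∧ D1 ⊆ D ∧
      μ D1 = (1 : ℝ≥0∞) / 2 ^ 1 * μ D ∧ 0 < μ D1 ∧ 0 < μ (D \ D1) := by
  obtain ⟨D1, hm, hsub, hμ⟩ := hdiv D hmD hpos (1/2) (by norm_num) (by norm_num)
  have h12 : ENNReal.ofReal ((1:ℝ)/2) = (1:ℝ≥0∞)/2^1 := by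
    have := ofReal_dyadic 1 1
    simpa using this
  have hμ' : μ D1 = (1:ℝ≥0∞)/2^1 * μ D := by rw [hμ, h12]
  have hhalf : (1:ℝ≥0∞)/2^1 * μ D = μ D / 2 := by
    rw [pow_one, one_div, ← ENNReal.div_eq_inv_mul]
  refine ⟨D1, hm, hsub, hμ', ?_, ?_⟩
  · rw [hμ', hhalf]
    exact ENNReal.half_pos hpos.ne'
  · rw [measure_diff hsub hm.nullMeasurableSet (measure_ne_top μ _), hμ', hhalf]
    exact tsub_pos_of_lt (ENNReal.half_lt_self hpos.ne' (measure_ne_top μ D))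

end Splitting

/-! ### Pieces of a Haar system -/

section Pieces

variable {Ω : Type*} [m0 : MeasurableSpace Ω] {μ : Measure Ω}

lemma HaarSystem.piece1_mem (T : HaarSystem Ω μ) (j : ℕ) : T.piece1 j ∈ T.part (j + 1) := by
  rw [T.part_succ j]; exact Finset.mem_insert_self _ _

lemma HaarSystem.piece2_mem (T : HaarSystem Ω μ) (j : ℕ) : T.piece2 j ∈ T.part (j + 1) := by
  rw [T.part_succ j]; exact Finset.mem_insert.mpr (Or.inr (Finset.mem_insert_self _ _))

lemma HaarSystem.piece1_pos (T : HaarSystem Ω μ) (j : ℕ) : 0 < μ (T.piece1 j) :=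
  T.pos (j + 1) _ (T.piece1_mem j)

lemma HaarSystem.piece2_pos (T : HaarSystem Ω μ) (j : ℕ) : 0 < μ (T.piece2 j) :=
  T.pos (j + 1) _ (T.piece2_mem j)

lemma HaarSystem.splitSet_pos (T : HaarSystem Ω μ) (j : ℕ) : 0 < μ (T.splitSet j) :=
  T.pos j _ (T.splitSet_mem j)

lemma HaarSystem.piece1_subset (T : HaarSystem Ω μ) (j : ℕ) :
    T.piece1 j ⊆ T.splitSet j := by
  rw [← T.union_pieces j]; exact Set.subset_union_left

lemma HaarSystem.piece2_subset (T : HaarSystem Ω μ) (j : ℕ) :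
    T.piece2 j ⊆ T.splitSet j := by
  rw [← T.union_pieces j]; exact Set.subset_union_right

lemma HaarSystem.piece1_ne_piece2 (T : HaarSystem Ω μ) (j : ℕ) :
    T.piece1 j ≠ T.piece2 j := by
  intro hcon
  have hd := T.disj_pieces j
  rw [hcon] at hd
  have h0 : T.piece2 j = ∅ := hd.eq_bot_of_self
  exact absurd (T.piece2_pos j) (by rw [h0]; simp)

lemma HaarSystem.piece1_not_mem (T : HaarSystem Ω μ) (j : ℕ) :
    T.piece1 j ∉ T.part j := by
  intro hmem
  by_cases hsp : T.piece1 j = T.splitSet j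
  · have hsub : T.piece2 j ⊆ T.piece1 j := by rw [hsp]; exact T.piece2_subset j
    have h0 : T.piece2 j = ∅ := Set.eq_empty_iff_forall_notMem.mpr fun x hx =>
      (T.disj_pieces j).le_bot ⟨hsub hx, hx⟩
    exact absurd (T.piece2_pos j) (by rw [h0]; simp)
  · have hd := T.disj j _ hmem _ (T.splitSet_mem j) hsp
    have h0 : T.piece1 j = ∅ := Set.eq_empty_iff_forall_notMem.mpr fun x hx =>
      hd.le_bot ⟨hx, T.piece1_subset j hx⟩
    exact absurd (T.piece1_pos j) (by rw [h0]; simp)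

lemma HaarSystem.piece2_not_mem (T : HaarSystem Ω μ) (j : ℕ) :
    T.piece2 j ∉ T.part j := by
  intro hmem
  by_cases hsp : T.piece2 j = T.splitSet j
  · have hsub : T.piece1 j ⊆ T.piece2 j := by rw [hsp]; exact T.piece1_subset j
    have h0 : T.piece1 j = ∅ := Set.eq_empty_iff_forall_notMem.mpr fun x hx =>
      (T.disj_pieces j).le_bot ⟨hx, hsub hx⟩
    exact absurd (T.piece1_pos j) (by rw [h0]; simp)
  · have hd := T.disj j _ hmem _ (T.splitSet_mem j) hsp
    have h0 : T.piece2 j = ∅ := Set.eq_empty_iff_forall_notMem.mpr fun x hx =>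
      hd.le_bot ⟨hx, T.piece2_subset j hx⟩
    exact absurd (T.piece2_pos j) (by rw [h0]; simp)

lemma HaarSystem.mem_part_succ (T : HaarSystem Ω μ) (j : ℕ) {B : Set Ω} :
    B ∈ T.part (j + 1) ↔
      B = T.piece1 j ∨ B = T.piece2 j ∨ (B ∈ T.part j ∧ B ≠ T.splitSet j) := by
  rw [T.part_succ j]
  simp only [Finset.mem_insert, Finset.mem_erase]
  tauto

end Pieces

/-! ### Approximating partition systems -/

section Approx

variable {Ω : Type*} [m0 : MeasurableSpace Ω] {μ : Measure Ω} [IsProbabilityMeasure μ]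

/-- A partition approximating `S.part j` within `b`, cell by cell. -/
structure Apx (S : HaarSystem Ω μ) (b : ℝ) (j : ℕ) where
  e : Set Ω → Set Ω
  meas : ∀ B ∈ S.part j, MeasurableSet (e B)
  disj : ∀ B ∈ S.part j, ∀ B' ∈ S.part j, B ≠ B' → Disjoint (e B) (e B')
  cover : ⋃ B ∈ S.part j, e B = Set.univ
  pos : ∀ B ∈ S.part j, 0 < μ (e B)
  close : ∀ B ∈ S.part j, μ (symmDiff (e B) B) ≤ ENNReal.ofReal b

/-- Compatibility of two successive approximating partitions. -/
def ApxCompat (S : HaarSystem Ω μ) (j : ℕ) (e e' : Set Ω → Set Ω) : Prop :=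
  (∀ B ∈ S.part j, B ≠ S.splitSet j → e' B = e B) ∧
  e' (S.piece1 j) ∪ e' (S.piece2 j) = e (S.splitSet j) ∧
  Disjoint (e' (S.piece1 j)) (e' (S.piece2 j)) ∧
  ∃ m k : ℕ, μ (e' (S.piece1 j)) = (m : ℝ≥0∞) / 2 ^ k * μ (e (S.splitSet j))

lemma apx_step_core {b b' : ℝ} {S : HaarSystem Ω μ} {j : ℕ} (a : Apx S b j) {D1 : Set Ω}
    (hmD1 : MeasurableSet D1) (hsub : D1 ⊆ a.e (S.splitSet j)) (hpos1 : 0 < μ D1)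
    (hpos2 : 0 < μ (a.e (S.splitSet j) \ D1)) (m k : ℕ)
    (hdy : μ D1 = (m : ℝ≥0∞) / 2 ^ k * μ (a.e (S.splitSet j)))
    (hcl1 : μ (symmDiff D1 (S.piece1 j)) ≤ ENNReal.ofReal b')
    (hcl2 : μ (symmDiff (a.e (S.splitSet j) \ D1) (S.piece2 j)) ≤ ENNReal.ofReal b')
    (hold : ∀ B ∈ S.part j, μ (symmDiff (a.e B) B) ≤ ENNReal.ofReal b') :
    ∃ a' : Apx S b' (j + 1), ApxCompat S j a.e a'.e := by
  set D := a.e (S.splitSet j) with hD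
  set e' : Set Ω → Set Ω := fun B =>
    if B = S.piece1 j then D1 else if B = S.piece2 j then D \ D1 else a.e B with he'
  have he'p1 : e' (S.piece1 j) = D1 := by simp [he']
  have he'p2 : e' (S.piece2 j) = D \ D1 := by
    simp only [he']
    rw [if_neg (Ne.symm (S.piece1_ne_piece2 j))]
    simp
  have he'old : ∀ B ∈ S.part j, e' B = a.e B := by
    intro B hB
    have h1 : B ≠ S.piece1 j := fun hc => S.piece1_not_mem j (hc ▸ hB)
    have h2 : B ≠ S.piece2 j := fun hc => S.piece2_not_mem j (hc ▸ hB)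
    simp only [he']
    rw [if_neg h1, if_neg h2]
  have hD2D : D \ D1 ⊆ D := Set.diff_subset
  refine ⟨⟨e', ?_, ?_, ?_, ?_, ?_⟩, ?_, ?_, ?_, ⟨m, k, ?_⟩⟩
  · intro B hB
    rcases (S.mem_part_succ j).mp hB with h | h | ⟨hBo, _⟩
    · rw [h, he'p1]; exact hmD1
    · rw [h, he'p2]; exact (a.meas _ (S.splitSet_mem j)).diff hmD1
    · rw [he'old B hBo]; exact a.meas B hBo
  · intro B hB B' hB' hne
    rcases (S.mem_part_succ j).mp hB with h1 | h1 | ⟨hBo, hBno⟩ <;>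
      rcases (S.mem_part_succ j).mp hB' with h2 | h2 | ⟨hBo', hBno'⟩
    · exact absurd (h1.trans h2.symm) hne
    · rw [h1, he'p1, h2, he'p2]; exact disjoint_sdiff_self_right
    · rw [h1, he'p1, he'old B' hBo']
      exact (a.disj _ (S.splitSet_mem j) _ hBo' fun hc => hBno' hc.symm).mono_left hsub
    · rw [h1, he'p2, h2, he'p1]; exact disjoint_sdiff_self_right.symm
    · exact absurd (h1.trans h2.symm) hne
    · rw [h1, he'p2, he'old B' hBo']
      exact (a.disj _ (S.splitSet_mem j) _ hBo' fun hc => hBno' hc.symm).mono_left hD2D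
    · rw [h2, he'p1, he'old B hBo]
      exact ((a.disj _ (S.splitSet_mem j) _ hBo fun hc => hBno hc.symm).mono_left hsub).symm
    · rw [h2, he'p2, he'old B hBo]
      exact ((a.disj _ (S.splitSet_mem j) _ hBo fun hc => hBno hc.symm).mono_left hD2D).symm
    · rw [he'old B hBo, he'old B' hBo']
      exact a.disj B hBo B' hBo' hne
  · rw [S.part_succ j, Finset.set_biUnion_insert, Finset.set_biUnion_insert, he'p1, he'p2]
    have herase : ⋃ B ∈ (S.part j).erase (S.splitSet j), e' B =
        ⋃ B ∈ (S.part j).erase (S.splitSet j), a.e B :=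
      Set.iUnion₂_congr fun B hB => he'old B (Finset.mem_of_mem_erase hB)
    rw [herase, ← Set.union_assoc, Set.union_diff_cancel hsub]
    have hc := a.cover
    rw [← Finset.insert_erase (S.splitSet_mem j), Finset.set_biUnion_insert] at hc
    exact hc
  · intro B hB
    rcases (S.mem_part_succ j).mp hB with h | h | ⟨hBo, _⟩
    · rw [h, he'p1]; exact hpos1
    · rw [h, he'p2]; exact hpos2
    · rw [he'old B hBo]; exact a.pos B hBo
  · intro B hB
    rcases (S.mem_part_succ j).mp hB with h | h | ⟨hBo, _⟩
    · rw [h, he'p1]; exact hcl1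
    · rw [h, he'p2]; exact hcl2
    · rw [he'old B hBo]; exact hold B hBo
  · exact fun B hB _ => he'old B hB
  · simp only [he'p1, he'p2]; exact Set.union_diff_cancel hsub
  · simp only [he'p1, he'p2]; exact disjoint_sdiff_self_right
  · simp only [he'p1]; exact hdy

lemma apx_step_careful (hdiv : Divisible μ) {S : HaarSystem Ω μ} {b b' δ : ℝ} {j : ℕ}
    (hδ : 0 < δ) (hδb : δ ≤ b) (a : Apx S b j)
    (hfeas : b + δ < (μ (S.piece1 j)).toReal)
    (h1 : b + δ ≤ b') (h2 : 2 * b + δ ≤ b') :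
    ∃ a' : Apx S b' (j + 1), ApxCompat S j a.e a'.e := by
  have hb0 : 0 ≤ b := hδ.le.trans hδb
  have hbb' : b ≤ b' := by linarith
  have hclose : μ (symmDiff (a.e (S.splitSet j)) (S.piece1 j ∪ S.piece2 j)) ≤
      ENNReal.ofReal b := by
    rw [S.union_pieces j]; exact a.close _ (S.splitSet_mem j)
  obtain ⟨D1, m, k, hm1, hsub, hdy, hlt1, hp1, hp2, hc1, hc2⟩ :=
    split_careful hdiv (S.meas (j + 1) _ (S.piece1_mem j)) (a.meas _ (S.splitSet_mem j))
      (S.disj_pieces j) (S.piece1_pos j) hb0 hδ hclose hfeas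
  exact apx_step_core a hm1 hsub hp1 hp2 m k hdy
    (hc1.trans (ENNReal.ofReal_le_ofReal h1))
    (hc2.trans (ENNReal.ofReal_le_ofReal h2))
    fun B hB => (a.close B hB).trans (ENNReal.ofReal_le_ofReal hbb')

lemma apx_step_half (hdiv : Divisible μ) {S : HaarSystem Ω μ} {b b' : ℝ} {j : ℕ}
    (hb' : 1 ≤ b') (a : Apx S b j) :
    ∃ a' : Apx S b' (j + 1), ApxCompat S j a.e a'.e := by
  obtain ⟨D1, hm, hsub, hdy, hp1, hp2⟩ :=
    split_half hdiv (a.meas _ (S.splitSet_mem j)) (a.pos _ (S.splitSet_mem j))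
  have htriv : ∀ s : Set Ω, μ s ≤ ENNReal.ofReal b' := fun s =>
    prob_le_one.trans (ENNReal.one_le_ofReal.mpr hb')
  exact apx_step_core a hm hsub hp1 hp2 1 1
    (by rw [Nat.cast_one]; exact hdy) (htriv _) (htriv _) fun B _ => htriv _

lemma apx_zero (hdiv : Divisible μ) (S : HaarSystem Ω μ) {δ b : ℝ} (hδ : 0 < δ)
    (hδb : δ ≤ b) (hfeas0 : ∀ A ∈ S.part 0, δ < (μ A).toReal) :
    ∃ a : Apx S b 0, ∀ A ∈ S.part 0,
      ∃ m k : ℕ, μ (a.e A) = (m : ℝ≥0∞) / 2 ^ k * μ (Set.univ : Set Ω) := by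
  obtain ⟨A1, A2, hne, hpart⟩ := Finset.card_eq_two.mp (S.card_part 0)
  have hA1 : A1 ∈ S.part 0 := by rw [hpart]; exact Finset.mem_insert_self _ _
  have hA2 : A2 ∈ S.part 0 := by rw [hpart]; simp
  have hcov : A1 ∪ A2 = Set.univ := by
    have hc := S.cover 0
    rw [hpart] at hc
    simpa using hc
  have hd := S.disj 0 A1 hA1 A2 hA2 hne
  have hclose : μ (symmDiff (Set.univ : Set Ω) (A1 ∪ A2)) ≤ ENNReal.ofReal 0 := by
    rw [hcov, symmDiff_self]
    simp
  obtain ⟨D1, m, k, hm1, hsub, hdy, hlt1, hp1, hp2, hc1, hc2⟩ :=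
    split_careful hdiv (S.meas 0 A1 hA1) MeasurableSet.univ hd (S.pos 0 A1 hA1)
      le_rfl hδ hclose (by rw [zero_add]; exact hfeas0 A1 hA1)
  set e0 : Set Ω → Set Ω := fun B => if B = A1 then D1 else Set.univ \ D1 with he0
  have he0A1 : e0 A1 = D1 := by simp [he0]
  have he0A2 : e0 A2 = Set.univ \ D1 := by
    simp only [he0]
    rw [if_neg (Ne.symm hne)]
  have hmemcase : ∀ A ∈ S.part 0, A = A1 ∨ A = A2 := by
    intro A hA
    rw [hpart] at hA
    simpa using hA
  have hmlt : m < 2 ^ k := by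
    have hr : (m : ℝ) < 2 ^ k := by
      rw [div_lt_one (by positivity)] at hlt1
      exact hlt1
    exact_mod_cast hr
  have hsum : ((2 ^ k - m : ℕ) : ℝ≥0∞) / 2 ^ k + (m : ℝ≥0∞) / 2 ^ k = 1 := by
    rw [ENNReal.div_add_div_same, ← Nat.cast_add, Nat.sub_add_cancel hmlt.le]
    rw [show ((2 ^ k : ℕ) : ℝ≥0∞) = 2 ^ k by push_cast; ring]
    exact ENNReal.div_self (by positivity) (by simp)
  have hdyA2 : μ (Set.univ \ D1) = ((2 ^ k - m : ℕ) : ℝ≥0∞) / 2 ^ k *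
      μ (Set.univ : Set Ω) := by
    rw [measure_univ, mul_one]
    have hμdiff : μ (Set.univ \ D1) = 1 - μ D1 := by
      rw [measure_diff (Set.subset_univ D1) hm1.nullMeasurableSet (measure_ne_top μ _),
        measure_univ]
    rw [hμdiff, hdy, measure_univ, mul_one]
    exact (ENNReal.eq_sub_of_add_eq
      (ENNReal.div_lt_top (by simp) (by positivity)).ne hsum).symm
  refine ⟨⟨e0, ?_, ?_, ?_, ?_, ?_⟩, ?_⟩
  · intro A hA
    rcases hmemcase A hA with h | h
    · rw [h, he0A1]; exact hm1
    · rw [h, he0A2]; exact MeasurableSet.univ.diff hm1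
  · intro A hA A' hA' hne'
    rcases hmemcase A hA with h | h <;> rcases hmemcase A' hA' with h' | h'
    · exact absurd (h.trans h'.symm) hne'
    · rw [h, he0A1, h', he0A2]; exact disjoint_sdiff_self_right
    · rw [h, he0A2, h', he0A1]; exact disjoint_sdiff_self_right.symm
    · exact absurd (h.trans h'.symm) hne'
  · rw [hpart, Finset.set_biUnion_insert, Finset.set_biUnion_singleton, he0A1, he0A2]
    exact Set.union_diff_cancel (Set.subset_univ D1)
  · intro A hA
    rcases hmemcase A hA with h | h
    · rw [h, he0A1]; exact hp1
    · rw [h, he0A2]; exact hp2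
  · intro A hA
    rcases hmemcase A hA with h | h
    · rw [h, he0A1]
      exact hc1.trans (ENNReal.ofReal_le_ofReal (by linarith))
    · rw [h, he0A2]
      exact hc2.trans (ENNReal.ofReal_le_ofReal (by linarith))
  · intro A hA
    rcases hmemcase A hA with h | h
    · refine ⟨m, k, ?_⟩
      show μ (e0 A) = _
      rw [h, he0A1]
      exact hdy
    · refine ⟨2 ^ k - m, k, ?_⟩
      show μ (e0 A) = _
      rw [h, he0A2]
      exact hdyA2

end Approx

/-! ### Approximation of a Haar system by a dyadic one -/

section DyadicApprox

variable {Ω : Type*} [m0 : MeasurableSpace Ω] {μ : Measure Ω} [IsProbabilityMeasure μ]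

lemma exists_dyadic_approx (hdiv : Divisible μ) (S : HaarSystem Ω μ) (n : ℕ) {ε : ℝ}
    (hε : 0 < ε) :
    ∃ S' : HaarSystem Ω μ, S'.IsDyadic ∧ ∃ c : ℕ → Set Ω → Set Ω,
      ∀ j ≤ n, ∀ B ∈ S.part j, c j B ∈ S'.part j ∧
        μ (symmDiff (c j B) B) ≤ ENNReal.ofReal ε := by
  have hMne : ((Finset.range (n + 1)).biUnion S.part).Nonempty := by
    obtain ⟨B, hB⟩ : (S.part 0).Nonempty :=
      Finset.card_pos.mp (by rw [S.card_part 0]; omega)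
    exact ⟨B, Finset.mem_biUnion.mpr ⟨0, Finset.mem_range.mpr (by omega), hB⟩⟩
  set M : Finset (Set Ω) := (Finset.range (n + 1)).biUnion S.part with hM
  set mstar := (M.image fun B => (μ B).toReal).min' (hMne.image _) with hmstar
  have hmstar_pos : 0 < mstar := by
    obtain ⟨x, hx, hxe⟩ := Finset.mem_image.mp ((M.image (fun B => (μ B).toReal)).min'_mem (hMne.image _))
    obtain ⟨j, _, hxP⟩ := Finset.mem_biUnion.mp hx
    rw [hmstar, ← hxe]
    exact ENNReal.toReal_pos (S.pos j x hxP).ne' (measure_ne_top μ x)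
  have hmstar_le : ∀ j ≤ n, ∀ B ∈ S.part j, mstar ≤ (μ B).toReal := by
    intro j hj B hB
    apply Finset.min'_le
    exact Finset.mem_image.mpr
      ⟨B, Finset.mem_biUnion.mpr ⟨j, Finset.mem_range.mpr (by omega), hB⟩, rfl⟩
  set δ := min ε mstar / (2 * 3 ^ (n + 1)) with hδdef
  have hminpos : 0 < min ε mstar := lt_min hε hmstar_pos
  have hδpos : 0 < δ := div_pos hminpos (by positivity)
  have hkey : δ * (2 * 3 ^ (n + 1)) = min ε mstar := by
    rw [hδdef]; field_simp
  have h3n : (1:ℝ) ≤ 3 ^ (n + 1) := one_le_pow₀ (by norm_num : (1:ℝ) ≤ 3)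
  set bfun : ℕ → ℝ := fun j => if j ≤ n then δ * 3 ^ (j + 1) else 2 with hbfun
  have hbfun_le : ∀ j ≤ n, bfun j = δ * 3 ^ (j + 1) := by
    intro j hj; rw [hbfun]; simp only [if_pos hj]
  have hbfun_le_eps : ∀ j ≤ n, bfun j ≤ ε := by
    intro j hj
    rw [hbfun_le j hj]
    have hp : (3:ℝ) ^ (j + 1) ≤ 3 ^ (n + 1) :=
      pow_le_pow_right₀ (by norm_num) (by omega)
    nlinarith [min_le_left ε mstar, hδpos.le, hminpos]
  have hbfun0 : δ ≤ bfun 0 := by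
    rw [hbfun_le 0 (by omega)]
    have h31 : (1:ℝ) ≤ 3 ^ (0 + 1) := by norm_num
    nlinarith [hδpos.le]
  have hfeas0 : ∀ A ∈ S.part 0, δ < (μ A).toReal := by
    intro A hA
    have h1 := hmstar_le 0 (by omega) A hA
    nlinarith [min_le_right ε mstar, hδpos]
  have hstep : ∀ j (a : Apx S (bfun j) j),
      ∃ a' : Apx S (bfun (j + 1)) (j + 1), ApxCompat S j a.e a'.e := by
    intro j a
    by_cases hj : j < n
    · have hbj : bfun j = δ * 3 ^ (j + 1) := hbfun_le j (by omega)
      have hbj1 : bfun (j + 1) = δ * 3 ^ (j + 2) := hbfun_le (j + 1) (by omega)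
      have hx1 : (1:ℝ) ≤ 3 ^ (j + 1) := one_le_pow₀ (by norm_num : (1:ℝ) ≤ 3)
      have hpow : (3:ℝ) ^ (j + 2) = 3 * 3 ^ (j + 1) := by ring
      apply apx_step_careful hdiv hδpos ?_ a ?_ ?_ ?_
      · rw [hbj]; nlinarith [hδpos.le]
      · rw [hbj]
        have h1 := hmstar_le (j + 1) (by omega) _ (S.piece1_mem j)
        have hp : (3:ℝ) ^ (j + 1) ≤ 3 ^ n := pow_le_pow_right₀ (by norm_num) (by omega)
        have hp2 : (3:ℝ) ^ (n + 1) = 3 * 3 ^ n := by ring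
        have hp3 : (0:ℝ) < 3 ^ n := by positivity
        nlinarith [min_le_right ε mstar, hδpos]
      · rw [hbj, hbj1]; nlinarith [hδpos.le]
      · rw [hbj, hbj1]; nlinarith [hδpos.le]
    · apply apx_step_half hdiv ?_ a
      have hb2 : bfun (j + 1) = 2 := by
        simp only [hbfun]
        rw [if_neg (by omega : ¬(j + 1 ≤ n))]
      rw [hb2]
      norm_num
  obtain ⟨a0, ha0⟩ := apx_zero hdiv S hδpos hbfun0 hfeas0
  let chain : ∀ j, Apx S (bfun j) j := fun j =>
    Nat.rec a0 (fun j a => (hstep j a).choose) j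
  have hchain : ∀ j, ApxCompat S j (chain j).e (chain (j + 1)).e := fun j =>
    (hstep j (chain j)).choose_spec
  have hinj : ∀ j, Set.InjOn (chain j).e (S.part j) := by
    intro j B hB B' hB' he
    by_contra hne
    have hd := (chain j).disj B hB B' hB' hne
    rw [he] at hd
    have h0 : (chain j).e B' = ∅ := hd.eq_bot_of_self
    exact absurd ((chain j).pos B' hB') (by rw [h0]; simp)
  refine ⟨⟨fun j => (S.part j).image (chain j).e, ?_, ?_, ?_, ?_, ?_,
    fun j => (chain j).e (S.splitSet j), fun j => (chain (j + 1)).e (S.piece1 j),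
    fun j => (chain (j + 1)).e (S.piece2 j), ?_, ?_, ?_, ?_⟩, ⟨?_, ?_⟩, ?_⟩
  · intro j
    rw [Finset.card_image_of_injOn (hinj j)]
    exact S.card_part j
  · intro j A hA
    obtain ⟨B, hB, rfl⟩ := Finset.mem_image.mp hA
    exact (chain j).meas B hB
  · intro j A hA A' hA' hne
    obtain ⟨B, hB, rfl⟩ := Finset.mem_image.mp hA
    obtain ⟨B', hB', rfl⟩ := Finset.mem_image.mp hA'
    exact (chain j).disj B hB B' hB' fun hc => hne (by rw [hc])
  · intro j
    rw [Finset.coe_image, Set.sUnion_image]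
    have hc := (chain j).cover
    simpa using hc
  · intro j A hA
    obtain ⟨B, hB, rfl⟩ := Finset.mem_image.mp hA
    exact (chain j).pos B hB
  · exact fun j => Finset.mem_image_of_mem _ (S.splitSet_mem j)
  · exact fun j => (hchain j).2.1
  · exact fun j => (hchain j).2.2.1
  · intro j
    show (S.part (j + 1)).image (chain (j + 1)).e =
      insert ((chain (j + 1)).e (S.piece1 j)) (insert ((chain (j + 1)).e (S.piece2 j))
        (((S.part j).image (chain j).e).erase ((chain j).e (S.splitSet j))))
    have h1 : (S.part (j + 1)).image (chain (j + 1)).e =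
        insert ((chain (j + 1)).e (S.piece1 j)) (insert ((chain (j + 1)).e (S.piece2 j))
          (((S.part j).erase (S.splitSet j)).image (chain (j + 1)).e)) := by
      rw [S.part_succ j, Finset.image_insert, Finset.image_insert]
    have h2 : ((S.part j).erase (S.splitSet j)).image (chain (j + 1)).e =
        ((S.part j).erase (S.splitSet j)).image (chain j).e :=
      Finset.image_congr fun B hB =>
        (hchain j).1 B (Finset.mem_of_mem_erase hB) (Finset.ne_of_mem_erase hB)
    have h3 : ((S.part j).erase (S.splitSet j)).image (chain j).e =
        ((S.part j).image (chain j).e).erase ((chain j).e (S.splitSet j)) := by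
      ext x
      simp only [Finset.mem_image, Finset.mem_erase]
      constructor
      · rintro ⟨B, ⟨hBne, hBmem⟩, rfl⟩
        exact ⟨fun hc => hBne (hinj j hBmem (S.splitSet_mem j) hc), B, hBmem, rfl⟩
      · rintro ⟨hxne, B, hB, rfl⟩
        exact ⟨B, ⟨fun hc => hxne (by rw [hc]), hB⟩, rfl⟩
    rw [h1, h2, h3]
  · intro A hA
    obtain ⟨B, hB, rfl⟩ := Finset.mem_image.mp hA
    exact ha0 B hB
  · exact fun j => (hchain j).2.2.2
  · refine ⟨fun j B => (chain j).e B, ?_⟩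
    intro j hj B hB
    refine ⟨Finset.mem_image_of_mem _ hB, ?_⟩
    exact ((chain j).close B hB).trans (ENNReal.ofReal_le_ofReal (hbfun_le_eps j hj))

end DyadicApprox

/-! ### rpow commutes with countable sups and liminfs -/

section RpowSup

lemma my_iSup_rpow {p : ℝ} (hp : 0 < p) (u : ℕ → ℝ≥0∞) :
    (⨆ n, u n) ^ p = ⨆ n, u n ^ p := by
  have happ : ∀ x : ℝ≥0∞, (ENNReal.orderIsoRpow p hp) x = x ^ p := fun x => by
    simp [ENNReal.orderIsoRpow, StrictMono.orderIsoOfRightInverse]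
  have h := OrderIso.map_iSup (ENNReal.orderIsoRpow p hp) u
  simp only [happ] at h
  exact h

lemma my_liminf_rpow {p : ℝ} (hp : 0 < p) (u : ℕ → ℝ≥0∞) :
    (Filter.liminf u Filter.atTop) ^ p = Filter.liminf (fun k => u k ^ p) Filter.atTop := by
  have happ : ∀ x : ℝ≥0∞, (ENNReal.orderIsoRpow p hp) x = x ^ p := fun x => by
    simp [ENNReal.orderIsoRpow, StrictMono.orderIsoOfRightInverse]
  rw [Filter.liminf_eq_iSup_iInf_of_nat, Filter.liminf_eq_iSup_iInf_of_nat]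
  have h1 := OrderIso.map_iSup (ENNReal.orderIsoRpow p hp) (fun n => ⨅ i ≥ n, u i)
  simp only [happ] at h1
  rw [h1]
  congr 1
  ext n
  have h2 := OrderIso.map_iInf (ENNReal.orderIsoRpow p hp) (fun i => ⨅ _ : i ≥ n, u i)
  simp only [happ] at h2
  rw [h2]
  congr 1
  ext i
  have h3 := OrderIso.map_iInf (ENNReal.orderIsoRpow p hp) (fun _ : i ≥ n => u i)
  simp only [happ] at h3
  rw [h3]

end RpowSup

/-! ### Convergence of cell averages -/

section CellAvg

variable {Ω : Type*} [m0 : MeasurableSpace Ω] {μ : Measure Ω} [IsProbabilityMeasure μ]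
variable {𝒳 : Type*} [NormedAddCommGroup 𝒳] [NormedSpace ℝ 𝒳]

lemma tendsto_cellAvg (f : Ω → 𝒳) (hf : Integrable f μ) {B : Set Ω}
    (hmB : MeasurableSet B) (hpos : 0 < μ B)
    (D : ℕ → Set Ω) (hmD : ∀ k, MeasurableSet (D k))
    (hcl : ∀ k, μ (symmDiff (D k) B) ≤ ENNReal.ofReal ((2⁻¹ : ℝ) ^ k)) :
    Filter.Tendsto (fun k => (μ (D k)).toReal⁻¹ • ∫ x in D k, f x ∂μ) Filter.atTop
      (nhds ((μ B).toReal⁻¹ • ∫ x in B, f x ∂μ)) := by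
  have hfin : ∀ s : Set Ω, μ s ≠ ⊤ := fun s => measure_ne_top μ s
  have hgeo : Filter.Tendsto (fun k => ((2:ℝ)⁻¹) ^ k) Filter.atTop (nhds 0) :=
    tendsto_pow_atTop_nhds_zero_of_lt_one (by norm_num) (by norm_num)
  have hclR : ∀ k, (μ (symmDiff (D k) B)).toReal ≤ (2⁻¹:ℝ) ^ k := by
    intro k
    have hh := ENNReal.toReal_mono ENNReal.ofReal_ne_top (hcl k)
    rwa [ENNReal.toReal_ofReal (by positivity)] at hh
  -- measures converge
  have hmeasconv : Filter.Tendsto (fun k => (μ (D k)).toReal) Filter.atTop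
      (nhds (μ B).toReal) := by
    rw [← tendsto_sub_nhds_zero_iff]
    apply squeeze_zero_norm (a := fun k => (2⁻¹:ℝ)^k) ?_ hgeo
    intro k
    have h1 : μ (D k) ≤ μ B + μ (symmDiff (D k) B) := by
      refine (measure_mono ?_).trans (measure_union_le _ _)
      intro x hx
      by_cases hxB : x ∈ B
      · exact Or.inl hxB
      · exact Or.inr (Set.mem_symmDiff.mpr (Or.inl ⟨hx, hxB⟩))
    have h2 : μ B ≤ μ (D k) + μ (symmDiff (D k) B) := by
      refine (measure_mono ?_).trans (measure_union_le _ _)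
      intro x hx
      by_cases hxD : x ∈ D k
      · exact Or.inl hxD
      · exact Or.inr (Set.mem_symmDiff.mpr (Or.inr ⟨hx, hxD⟩))
    have h1' : (μ (D k)).toReal ≤ (μ B).toReal + (μ (symmDiff (D k) B)).toReal := by
      have hh := ENNReal.toReal_mono (ENNReal.add_ne_top.mpr ⟨hfin _, hfin _⟩) h1
      rwa [ENNReal.toReal_add (hfin _) (hfin _)] at hh
    have h2' : (μ B).toReal ≤ (μ (D k)).toReal + (μ (symmDiff (D k) B)).toReal := by
      have hh := ENNReal.toReal_mono (ENNReal.add_ne_top.mpr ⟨hfin _, hfin _⟩) h2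
      rwa [ENNReal.toReal_add (hfin _) (hfin _)] at hh
    rw [Real.norm_eq_abs, abs_sub_le_iff]
    constructor <;> [skip; skip] <;> linarith [hclR k]
  -- tail sets
  set G : ℕ → Set Ω := fun k => ⋃ i : ℕ, symmDiff (D (k + i)) B with hG
  have hGmeas : ∀ k, MeasurableSet (G k) := fun k =>
    MeasurableSet.iUnion fun i => (hmD (k + i)).symmDiff hmB
  have hGanti : Antitone G := by
    apply antitone_nat_of_succ_le
    intro k x hx
    rcases Set.mem_iUnion.mp hx with ⟨i, hi⟩
    exact Set.mem_iUnion.mpr ⟨i + 1, by rwa [show k + (i + 1) = k + 1 + i by omega]⟩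
  have hofr : ∀ i : ℕ, ENNReal.ofReal ((2⁻¹:ℝ)^i) = (2⁻¹:ℝ≥0∞)^i := by
    intro i
    rw [ENNReal.ofReal_pow (by norm_num), ENNReal.ofReal_inv_of_pos (by norm_num)]
    norm_num
  have hGbound : ∀ k, μ (G k) ≤ 2 * ENNReal.ofReal ((2⁻¹:ℝ)^k) := by
    intro k
    calc μ (G k) ≤ ∑' i, μ (symmDiff (D (k + i)) B) := measure_iUnion_le _
      _ ≤ ∑' i : ℕ, ENNReal.ofReal ((2⁻¹:ℝ)^(k + i)) := ENNReal.tsum_le_tsum fun i => hcl _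
      _ = ∑' i : ℕ, ENNReal.ofReal ((2⁻¹:ℝ)^k) * (2⁻¹:ℝ≥0∞)^i := by
          congr 1
          ext i
          rw [pow_add, ENNReal.ofReal_mul (by positivity), hofr i]
      _ = ENNReal.ofReal ((2⁻¹:ℝ)^k) * ∑' i : ℕ, (2⁻¹:ℝ≥0∞)^i := ENNReal.tsum_mul_left
      _ = ENNReal.ofReal ((2⁻¹:ℝ)^k) * 2 := by
          rw [ENNReal.tsum_geometric, ENNReal.one_sub_inv_two, inv_inv]
      _ = 2 * ENNReal.ofReal ((2⁻¹:ℝ)^k) := mul_comm _ _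
  have hInull : μ (⋂ k, G k) = 0 := by
    have hle : ∀ k, μ (⋂ k, G k) ≤ 2 * ENNReal.ofReal ((2⁻¹:ℝ)^k) := fun k =>
      (measure_mono (Set.iInter_subset _ k)).trans (hGbound k)
    have hlim : Filter.Tendsto (fun k => 2 * ENNReal.ofReal ((2⁻¹:ℝ)^k)) Filter.atTop
        (nhds 0) := by
      have h1 : Filter.Tendsto (fun k => ENNReal.ofReal ((2⁻¹:ℝ)^k)) Filter.atTop
          (nhds 0) := by
        have := ENNReal.tendsto_ofReal hgeo
        simpa using this
      have h2 := ENNReal.Tendsto.const_mul h1 (Or.inr (by norm_num : (2:ℝ≥0∞) ≠ ⊤))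
      simpa using h2
    exact le_zero_iff.mp (ge_of_tendsto' hlim hle)
  have hintG : Filter.Tendsto (fun k => ∫ x in G k, ‖f x‖ ∂μ) Filter.atTop (nhds 0) := by
    have h0 : (∫ x in (⋂ k, G k), ‖f x‖ ∂μ) = 0 := by
      rw [Measure.restrict_eq_zero.mpr hInull]
      exact integral_zero_measure _
    rw [← h0]
    have hdc := MeasureTheory.tendsto_integral_of_dominated_convergence
      (F := fun k => Set.indicator (G k) fun x => ‖f x‖)
      (f := Set.indicator (⋂ k, G k) fun x => ‖f x‖)
      (bound := fun x => ‖f x‖)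
      (fun k => (hf.1.norm).indicator (hGmeas k)) hf.norm
      (fun k => Filter.Eventually.of_forall fun x => by
        show ‖Set.indicator (G k) (fun y => ‖f y‖) x‖ ≤ ‖f x‖
        by_cases hx : x ∈ G k
        · rw [Set.indicator_of_mem hx, norm_norm]
        · rw [Set.indicator_of_notMem hx]
          simp)
      (Filter.Eventually.of_forall fun x => by
        show Filter.Tendsto (fun k => Set.indicator (G k) (fun y => ‖f y‖) x)
          Filter.atTop (nhds (Set.indicator (⋂ k, G k) (fun y => ‖f y‖) x))
        by_cases hx : x ∈ ⋂ k, G k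
        · have hall : ∀ k, x ∈ G k := Set.mem_iInter.mp hx
          have heq : (fun k => Set.indicator (G k) (fun y => ‖f y‖) x) =
              fun _ => ‖f x‖ := funext fun k => Set.indicator_of_mem (hall k) _
          rw [heq, Set.indicator_of_mem hx]
          exact tendsto_const_nhds
        · obtain ⟨K, hK⟩ : ∃ K, x ∉ G K := by
            simpa [Set.mem_iInter] using hx
          rw [Set.indicator_of_notMem hx]
          apply tendsto_atTop_of_eventually_const (i₀ := K)
          intro k hk
          exact Set.indicator_of_notMem (fun hmem => hK (hGanti hk hmem)) _)
    simpa [MeasureTheory.integral_indicator (hGmeas _),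
      MeasureTheory.integral_indicator (MeasurableSet.iInter hGmeas)] using hdc
  have hIconv : Filter.Tendsto (fun k => ∫ x in D k, f x ∂μ) Filter.atTop
      (nhds (∫ x in B, f x ∂μ)) := by
    rw [← tendsto_sub_nhds_zero_iff]
    apply squeeze_zero_norm (a := fun k => ∫ x in G k, ‖f x‖ ∂μ) ?_ hintG
    intro k
    have hdisj1 : Disjoint (D k ∩ B) (D k \ B) :=
      (disjoint_sdiff_self_right : Disjoint B (D k \ B)).mono_left Set.inter_subset_right
    have hdisj2 : Disjoint (B ∩ D k) (B \ D k) :=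
      (disjoint_sdiff_self_right : Disjoint (D k) (B \ D k)).mono_left Set.inter_subset_right
    have hDdec : ∫ x in D k, f x ∂μ =
        (∫ x in D k ∩ B, f x ∂μ) + ∫ x in D k \ B, f x ∂μ := by
      rw [← MeasureTheory.setIntegral_union hdisj1 ((hmD k).diff hmB)
        hf.integrableOn hf.integrableOn, Set.inter_union_diff]
    have hBdec : ∫ x in B, f x ∂μ =
        (∫ x in B ∩ D k, f x ∂μ) + ∫ x in B \ D k, f x ∂μ := by
      rw [← MeasureTheory.setIntegral_union hdisj2 (hmB.diff (hmD k))
        hf.integrableOn hf.integrableOn, Set.inter_union_diff]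
    have hsymmdisj : Disjoint (D k \ B) (B \ D k) :=
      Set.disjoint_left.mpr fun x hx1 hx2 => hx1.2 hx2.1
    calc ‖(∫ x in D k, f x ∂μ) - ∫ x in B, f x ∂μ‖
        = ‖(∫ x in D k \ B, f x ∂μ) - ∫ x in B \ D k, f x ∂μ‖ := by
          rw [hDdec, hBdec, Set.inter_comm (D k) B, add_sub_add_left_eq_sub]
      _ ≤ ‖∫ x in D k \ B, f x ∂μ‖ + ‖∫ x in B \ D k, f x ∂μ‖ := norm_sub_le _ _
      _ ≤ (∫ x in D k \ B, ‖f x‖ ∂μ) + ∫ x in B \ D k, ‖f x‖ ∂μ :=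
          add_le_add (norm_integral_le_integral_norm _) (norm_integral_le_integral_norm _)
      _ = ∫ x in symmDiff (D k) B, ‖f x‖ ∂μ := by
          rw [Set.symmDiff_def, MeasureTheory.setIntegral_union hsymmdisj
            (hmB.diff (hmD k)) hf.norm.integrableOn hf.norm.integrableOn]
      _ ≤ ∫ x in G k, ‖f x‖ ∂μ := by
          apply MeasureTheory.setIntegral_mono_set hf.norm.integrableOn
            (Filter.Eventually.of_forall fun x => norm_nonneg _)
          apply HasSubset.Subset.eventuallyLE
          intro x hx
          exact Set.mem_iUnion.mpr ⟨0, hx⟩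
  have hinv : Filter.Tendsto (fun k => (μ (D k)).toReal⁻¹) Filter.atTop
      (nhds (μ B).toReal⁻¹) :=
    hmeasconv.inv₀ (ENNReal.toReal_pos hpos.ne' (hfin B)).ne'
  exact hinv.smul hIconv

end CellAvg

/-! ### Measurability of the stage functions -/

section StageMeas

variable {𝒳 : Type*} [NormedAddCommGroup 𝒳] [NormedSpace ℝ 𝒳] [CompleteSpace 𝒳]
variable {Ω : Type*} [m0 : MeasurableSpace Ω] {μ : Measure Ω} [IsProbabilityMeasure μ]

lemma measurable_sFun (T : HaarSystem Ω μ) (f : Ω → 𝒳) (nn : ℕ) :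
    Measurable (fun ξ => Rbound {y : 𝒳 | ∃ j ≤ nn, y = haarCE T f j ξ}) := by
  apply T.measurable_of_cellConst nn
  intro A hA ξ hξ ξ' hξ'
  have hval : ∀ j ≤ nn, haarCE T f j ξ = haarCE T f j ξ' := by
    intro j hj
    obtain ⟨B, hB, hAB⟩ := T.refines hj hA
    rw [haarCE_eq_avg T f hB (hAB hξ), haarCE_eq_avg T f hB (hAB hξ')]
  congr 1
  ext y
  simp only [Set.mem_setOf_eq]
  constructor
  · rintro ⟨j, hj, rfl⟩
    exact ⟨j, hj, hval j hj⟩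
  · rintro ⟨j, hj, rfl⟩
    exact ⟨j, hj, (hval j hj).symm⟩

end StageMeas

/-- If `𝒳` has `RMF_p` with constant `C` w.r.t. every dyadic Haar filtration on a
divisible probability space, then it has `RMF_p` with constant `C` w.r.t. every Haar
filtration on it. -/
theorem statement8 {𝒳 : Type*} [NormedAddCommGroup 𝒳] [NormedSpace ℝ 𝒳] [CompleteSpace 𝒳]
    (p C : ℝ) (hp1 : 1 < p) {Ω : Type*} [m0 : MeasurableSpace Ω] (μ : Measure Ω)
    [IsProbabilityMeasure μ] (hdiv : Divisible μ)
    (h : ∀ S : HaarSystem Ω μ, S.IsDyadic → RMFpWith 𝒳 p C μ S.salg) :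
    ∀ S : HaarSystem Ω μ, RMFpWith 𝒳 p C μ S.salg := by
  intro S f hfmem
  have hp0 : 0 < p := by linarith
  have hf : Integrable f μ := hfmem.integrable (ENNReal.one_le_ofReal.mpr (by linarith))
  set R := ENNReal.ofReal C * eLpNorm f (ENNReal.ofReal p) μ with hR
  -- dyadic approximants
  have happrox : ∀ k : ℕ, ∃ S' : HaarSystem Ω μ, S'.IsDyadic ∧ ∃ c : ℕ → Set Ω → Set Ω,
      ∀ j ≤ k, ∀ B ∈ S.part j, c j B ∈ S'.part j ∧
        μ (symmDiff (c j B) B) ≤ ENNReal.ofReal ((2⁻¹:ℝ) ^ k) :=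
    fun k => exists_dyadic_approx hdiv S k (by positivity)
  choose Sk hSkdy ck hck using happrox
  -- bound for each dyadic system
  have hMRk : ∀ k, (∫⁻ ξ, MRfilt μ (Sk k).salg f ξ ^ p ∂μ) ≤ R ^ p := by
    intro k
    have hh := h (Sk k) (hSkdy k) f hfmem
    have hid : ((∫⁻ ξ, MRfilt μ (Sk k).salg f ξ ^ p ∂μ) ^ (1/p)) ^ p =
        ∫⁻ ξ, MRfilt μ (Sk k).salg f ξ ^ p ∂μ := by
      rw [← ENNReal.rpow_mul, one_div_mul_cancel hp0.ne', ENNReal.rpow_one]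
    calc ∫⁻ ξ, MRfilt μ (Sk k).salg f ξ ^ p ∂μ
        = ((∫⁻ ξ, MRfilt μ (Sk k).salg f ξ ^ p ∂μ) ^ (1/p)) ^ p := hid.symm
      _ ≤ R ^ p := ENNReal.rpow_le_rpow hh hp0.le
  -- identification of conditional expectations
  have hae1 : ∀ᵐ ξ ∂μ, ∀ j, (μ[f| S.salg j]) ξ = haarCE S f j ξ := by
    rw [MeasureTheory.ae_all_iff]
    exact fun j => condexp_haar_ae S f hf j
  have hae2 : ∀ᵐ ξ ∂μ, ∀ k j, (μ[f| (Sk k).salg j]) ξ = haarCE (Sk k) f j ξ := by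
    rw [MeasureTheory.ae_all_iff]
    intro k
    rw [MeasureTheory.ae_all_iff]
    exact fun j => condexp_haar_ae (Sk k) f hf j
  -- a.e. convergence of the approximating cell averages
  have haeconv : ∀ᵐ ξ ∂μ, ∀ j : ℕ,
      Filter.Tendsto (fun k => haarCE (Sk k) f j ξ) Filter.atTop
        (nhds (haarCE S f j ξ)) := by
    rw [MeasureTheory.ae_all_iff]
    intro j
    set E : ℕ → Set Ω := fun k =>
      if j ≤ k then ⋃ B ∈ S.part j, (B \ ck k j B) else ∅ with hE
    have hEbound : ∀ k, μ (E k) ≤ ((S.part j).card : ℝ≥0∞) *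
        ENNReal.ofReal ((2⁻¹:ℝ) ^ k) := by
      intro k
      by_cases hjk : j ≤ k
      · have hEk : E k = ⋃ B ∈ S.part j, (B \ ck k j B) := by
          simp only [hE]; rw [if_pos hjk]
        rw [hEk]
        calc μ (⋃ B ∈ S.part j, (B \ ck k j B))
            ≤ ∑ B ∈ S.part j, μ (B \ ck k j B) := measure_biUnion_finset_le _ _
          _ ≤ ∑ _B ∈ S.part j, ENNReal.ofReal ((2⁻¹:ℝ) ^ k) := by
              apply Finset.sum_le_sum
              intro B hB
              refine le_trans (measure_mono ?_) ((hck k j hjk B hB).2)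
              intro x hx
              exact Set.mem_symmDiff.mpr (Or.inr ⟨hx.1, hx.2⟩)
          _ = ((S.part j).card : ℝ≥0∞) * ENNReal.ofReal ((2⁻¹:ℝ) ^ k) := by
              rw [Finset.sum_const, nsmul_eq_mul]
      · have hEk : E k = ∅ := by simp only [hE]; rw [if_neg hjk]
        rw [hEk]
        simp
    have hofr : ∀ i : ℕ, ENNReal.ofReal ((2⁻¹:ℝ)^i) = (2⁻¹:ℝ≥0∞)^i := by
      intro i
      rw [ENNReal.ofReal_pow (by norm_num), ENNReal.ofReal_inv_of_pos (by norm_num)]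
      norm_num
    have hsum : (∑' k, μ (E k)) ≠ ⊤ := by
      apply ne_top_of_le_ne_top (b := ((S.part j).card : ℝ≥0∞) * 2)
      · exact ENNReal.mul_ne_top (ENNReal.natCast_ne_top _) (by norm_num)
      · calc (∑' k, μ (E k))
            ≤ ∑' k, ((S.part j).card : ℝ≥0∞) * ENNReal.ofReal ((2⁻¹:ℝ) ^ k) :=
              ENNReal.tsum_le_tsum hEbound
          _ = ((S.part j).card : ℝ≥0∞) * ∑' k, ENNReal.ofReal ((2⁻¹:ℝ) ^ k) :=
              ENNReal.tsum_mul_left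
          _ = ((S.part j).card : ℝ≥0∞) * 2 := by
              congr 1
              calc (∑' k : ℕ, ENNReal.ofReal ((2⁻¹:ℝ) ^ k))
                  = ∑' k : ℕ, (2⁻¹:ℝ≥0∞) ^ k := by
                    congr 1
                    ext k
                    exact hofr k
                _ = 2 := by rw [ENNReal.tsum_geometric, ENNReal.one_sub_inv_two, inv_inv]
    have hBC : μ (Filter.limsup E Filter.atTop) = 0 :=
      MeasureTheory.measure_limsup_atTop_eq_zero hsum
    have haeE : ∀ᵐ ξ ∂μ, ξ ∉ Filter.limsup E Filter.atTop :=
      measure_eq_zero_iff_ae_notMem.mp hBC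
    filter_upwards [haeE] with ξ hξ
    obtain ⟨B, hB, hξB⟩ := S.exists_mem_cell j ξ
    have hnot : ∃ K, ∀ k, K ≤ k → ξ ∉ E k := by
      rw [Filter.limsup_eq_iInf_iSup_of_nat] at hξ
      simp only [iInf_eq_iInter, iSup_eq_iUnion, Set.mem_iInter, Set.mem_iUnion,
        not_forall, not_exists] at hξ
      obtain ⟨K, hK⟩ := hξ
      exact ⟨K, fun k hk => hK k hk⟩
    obtain ⟨K, hK⟩ := hnot
    have hev : ∀ᶠ k in Filter.atTop, ξ ∈ ck k j B := by
      rw [Filter.eventually_atTop]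
      refine ⟨max K j, fun k hk => ?_⟩
      have hjk : j ≤ k := le_trans (le_max_right K j) hk
      have hKk := hK k (le_trans (le_max_left K j) hk)
      have hEk : E k = ⋃ B' ∈ S.part j, (B' \ ck k j B') := by
        simp only [hE]; rw [if_pos hjk]
      rw [hEk] at hKk
      by_contra hcon
      exact hKk (Set.mem_biUnion hB ⟨hξB, hcon⟩)
    have hevEq : ∀ᶠ k in Filter.atTop,
        haarCE (Sk k) f j ξ = (μ (ck k j B)).toReal⁻¹ • ∫ x in ck k j B, f x ∂μ := by
      filter_upwards [hev, Filter.eventually_ge_atTop j] with k hk hjk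
      exact haarCE_eq_avg (Sk k) f ((hck k j hjk B hB).1) hk
    rw [show haarCE S f j ξ = (μ B).toReal⁻¹ • ∫ x in B, f x ∂μ from
      haarCE_eq_avg S f hB hξB]
    have hshift : Filter.Tendsto
        (fun k => (μ (ck (k + j) j B)).toReal⁻¹ • ∫ x in ck (k + j) j B, f x ∂μ)
        Filter.atTop (nhds ((μ B).toReal⁻¹ • ∫ x in B, f x ∂μ)) := by
      apply tendsto_cellAvg f hf (S.meas j B hB) (S.pos j B hB)
        (fun k => ck (k + j) j B)
        (fun k => (Sk (k + j)).meas j _ (hck (k + j) j (by omega) B hB).1)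
      intro k
      refine ((hck (k + j) j (by omega) B hB).2).trans (ENNReal.ofReal_le_ofReal ?_)
      exact pow_le_pow_of_le_one (by norm_num) (by norm_num) (by omega)
    have htd := (Filter.tendsto_add_atTop_iff_nat
      (f := fun k => (μ (ck k j B)).toReal⁻¹ • ∫ x in ck k j B, f x ∂μ) j).mp hshift
    have hevEq' : (fun k => (μ (ck k j B)).toReal⁻¹ • ∫ x in ck k j B, f x ∂μ)
        =ᶠ[Filter.atTop] (fun k => haarCE (Sk k) f j ξ) := hevEq.mono fun k hk => hk.symm
    exact Filter.Tendsto.congr' hevEq' htd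
  -- AE-measurability of the approximating maximal functions
  have hMRkmeas : ∀ k, AEMeasurable (fun ξ => MRfilt μ (Sk k).salg f ξ ^ p) μ := by
    intro k
    have hmeas : Measurable (fun ξ =>
        (⨆ nn, Rbound {y : 𝒳 | ∃ j ≤ nn, y = haarCE (Sk k) f j ξ}) ^ p) :=
      (ENNReal.continuous_rpow_const.measurable).comp
        (Measurable.iSup fun nn => measurable_sFun (Sk k) f nn)
    apply AEMeasurable.congr hmeas.aemeasurable
    filter_upwards [hae2] with ξ hξ
    have : (⨆ nn, Rbound {y : 𝒳 | ∃ j ≤ nn, y = haarCE (Sk k) f j ξ}) =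
        MRfilt μ (Sk k).salg f ξ := by
      rw [MRfilt_eq_iSup]
      congr 1
      ext nn
      congr 1
      ext y
      simp only [Set.mem_setOf_eq]
      constructor
      · rintro ⟨j, hj, rfl⟩
        exact ⟨j, hj, (hξ k j).symm⟩
      · rintro ⟨j, hj, rfl⟩
        exact ⟨j, hj, hξ k j⟩
    rw [this]
  -- a.e. stage inequality
  have hstage : ∀ nn : ℕ, ∀ᵐ ξ ∂μ,
      Rbound {y : 𝒳 | ∃ j ≤ nn, y = (μ[f| S.salg j]) ξ} ^ p ≤
        Filter.liminf (fun k => MRfilt μ (Sk k).salg f ξ ^ p) Filter.atTop := by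
    intro nn
    filter_upwards [hae1, hae2, haeconv] with ξ hξ1 hξ2 hξ3
    have hset1 : {y : 𝒳 | ∃ j ≤ nn, y = (μ[f| S.salg j]) ξ} =
        {x : 𝒳 | ∃ i : Fin (nn + 1), x = haarCE S f (i : ℕ) ξ} := by
      ext y
      simp only [Set.mem_setOf_eq]
      constructor
      · rintro ⟨j, hj, rfl⟩
        exact ⟨⟨j, by omega⟩, by rw [hξ1 j]⟩
      · rintro ⟨i, rfl⟩
        exact ⟨(i : ℕ), by omega, (hξ1 (i : ℕ)).symm⟩
    have hlsc := Rbound_le_liminf (fun i : Fin (nn + 1) => haarCE S f (i : ℕ) ξ)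
      (fun k i => haarCE (Sk k) f (i : ℕ) ξ) (fun i => hξ3 (i : ℕ))
    have hcompare : ∀ k,
        Rbound {x : 𝒳 | ∃ i : Fin (nn + 1), x = haarCE (Sk k) f (i : ℕ) ξ} ≤
          MRfilt μ (Sk k).salg f ξ := by
      intro k
      apply Rbound_mono
      rintro y ⟨i, rfl⟩
      exact ⟨(i : ℕ), (hξ2 k (i : ℕ)).symm⟩
    have hliminf : Filter.liminf
        (fun k => Rbound {x : 𝒳 | ∃ i : Fin (nn + 1), x = haarCE (Sk k) f (i : ℕ) ξ})
        Filter.atTop ≤ Filter.liminf (fun k => MRfilt μ (Sk k).salg f ξ) Filter.atTop :=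
      Filter.liminf_le_liminf (Filter.Eventually.of_forall hcompare)
    have hfinal : Rbound {y : 𝒳 | ∃ j ≤ nn, y = (μ[f| S.salg j]) ξ} ≤
        Filter.liminf (fun k => MRfilt μ (Sk k).salg f ξ) Filter.atTop := by
      rw [hset1]
      exact hlsc.trans hliminf
    calc Rbound {y : 𝒳 | ∃ j ≤ nn, y = (μ[f| S.salg j]) ξ} ^ p
        ≤ (Filter.liminf (fun k => MRfilt μ (Sk k).salg f ξ) Filter.atTop) ^ p :=
          ENNReal.rpow_le_rpow hfinal hp0.le
      _ = Filter.liminf (fun k => MRfilt μ (Sk k).salg f ξ ^ p) Filter.atTop :=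
          my_liminf_rpow hp0 _
  -- Fatou
  have hFatou : ∀ nn, (∫⁻ ξ, Rbound {y : 𝒳 | ∃ j ≤ nn, y = (μ[f| S.salg j]) ξ} ^ p ∂μ)
      ≤ R ^ p := by
    intro nn
    calc (∫⁻ ξ, Rbound {y : 𝒳 | ∃ j ≤ nn, y = (μ[f| S.salg j]) ξ} ^ p ∂μ)
        ≤ ∫⁻ ξ, Filter.liminf (fun k => MRfilt μ (Sk k).salg f ξ ^ p) Filter.atTop ∂μ :=
          lintegral_mono_ae (hstage nn)
      _ ≤ Filter.liminf (fun k => ∫⁻ ξ, MRfilt μ (Sk k).salg f ξ ^ p ∂μ) Filter.atTop :=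
          lintegral_liminf_le' hMRkmeas
      _ ≤ R ^ p := by
          rw [Filter.liminf_eq_iSup_iInf_of_nat]
          apply iSup_le
          intro n
          exact le_trans (iInf₂_le n le_rfl) (hMRk n)
  -- measurability and monotonicity of the stages
  have hstagemeas : ∀ nn, AEMeasurable
      (fun ξ => Rbound {y : 𝒳 | ∃ j ≤ nn, y = (μ[f| S.salg j]) ξ} ^ p) μ := by
    intro nn
    apply AEMeasurable.congr
      ((ENNReal.continuous_rpow_const.measurable).comp (measurable_sFun S f nn)).aemeasurable
    filter_upwards [hae1] with ξ hξ
    have : {y : 𝒳 | ∃ j ≤ nn, y = haarCE S f j ξ} =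
        {y : 𝒳 | ∃ j ≤ nn, y = (μ[f| S.salg j]) ξ} := by
      ext y
      simp only [Set.mem_setOf_eq]
      constructor
      · rintro ⟨j, hj, rfl⟩
        exact ⟨j, hj, (hξ j).symm⟩
      · rintro ⟨j, hj, rfl⟩
        exact ⟨j, hj, hξ j⟩
    show Rbound {y : 𝒳 | ∃ j ≤ nn, y = haarCE S f j ξ} ^ p = _
    rw [this]
  have hmono : ∀ᵐ ξ ∂μ, Monotone
      (fun nn => Rbound {y : 𝒳 | ∃ j ≤ nn, y = (μ[f| S.salg j]) ξ} ^ p) := by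
    apply Filter.Eventually.of_forall
    intro ξ nn mm hnm
    apply ENNReal.rpow_le_rpow ?_ hp0.le
    apply Rbound_mono
    rintro y ⟨j, hj, rfl⟩
    exact ⟨j, by omega, rfl⟩
  -- main bound
  have hkey : (∫⁻ ξ, MRfilt μ S.salg f ξ ^ p ∂μ) ≤ R ^ p := by
    have hsup : ∀ ξ, MRfilt μ S.salg f ξ ^ p =
        ⨆ nn, Rbound {y : 𝒳 | ∃ j ≤ nn, y = (μ[f| S.salg j]) ξ} ^ p := by
      intro ξ
      rw [MRfilt_eq_iSup, my_iSup_rpow hp0]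
    calc (∫⁻ ξ, MRfilt μ S.salg f ξ ^ p ∂μ)
        = ∫⁻ ξ, ⨆ nn, Rbound {y : 𝒳 | ∃ j ≤ nn, y = (μ[f| S.salg j]) ξ} ^ p ∂μ :=
          lintegral_congr hsup
      _ = ⨆ nn, ∫⁻ ξ, Rbound {y : 𝒳 | ∃ j ≤ nn, y = (μ[f| S.salg j]) ξ} ^ p ∂μ :=
          lintegral_iSup' hstagemeas hmono
      _ ≤ R ^ p := iSup_le hFatou
  calc (∫⁻ ξ, MRfilt μ S.salg f ξ ^ p ∂μ) ^ (1/p)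
      ≤ (R ^ p) ^ (1/p) := ENNReal.rpow_le_rpow hkey (by positivity)
    _ = R := by rw [← ENNReal.rpow_mul, mul_one_div_cancel hp0.ne', ENNReal.rpow_one]

end RMF
end
end

section
/- Let 1 < p < ∞ and let 𝒳 be a Banach space. If there is a constant C such that 𝒳 has RMF_p with constant C with respect to every filtration on every divisible measure space of total measure one, then 𝒳 has RMF_p with constant C with respect to every filtration on every measure space of total measure one. -/
open MeasureTheory Finset Set
open scoped ENNReal NNReal

noncomputable section

namespace RMF

open scoped Classical

universe u

lemma aux_lintegral_fst {Ω : Type*} [MeasurableSpace Ω] (μ : Measure Ω) (ν : Measure ℝ)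
    [SigmaFinite μ] [IsProbabilityMeasure ν] (g : Ω → ℝ≥0∞) :
    ∫⁻ x : Ω × ℝ, g x.1 ∂(μ.prod ν) = ∫⁻ ω, g ω ∂μ := by
  have hmap : (μ.prod ν).map Prod.fst = μ := by
    simp [Measure.map_fst_prod]
  apply le_antisymm
  · rw [← iSup_lintegral_measurable_le_eq_lintegral (μ := μ.prod ν) (fun x : Ω × ℝ => g x.1)]
    refine iSup_le fun φ => iSup_le fun hφ => iSup_le fun hle => ?_
    rw [lintegral_prod _ hφ.aemeasurable]
    refine lintegral_mono fun ω => ?_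
    calc ∫⁻ t, φ (ω, t) ∂ν ≤ ∫⁻ _, g ω ∂ν := lintegral_mono fun t => hle (ω, t)
      _ = g ω := by simp
  · calc ∫⁻ ω, g ω ∂μ = ∫⁻ ω, g ω ∂((μ.prod ν).map Prod.fst) := by rw [hmap]
      _ ≤ ∫⁻ x : Ω × ℝ, g x.1 ∂(μ.prod ν) := lintegral_map_le g Prod.fst

lemma aux_integrable_fst {𝒳 : Type*} [NormedAddCommGroup 𝒳] {Ω : Type*} [MeasurableSpace Ω]
    {μ : Measure Ω} {ν : Measure ℝ} [IsProbabilityMeasure ν] [SFinite μ]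
    {g : Ω → 𝒳} (hg : Integrable g μ) : Integrable (fun x : Ω × ℝ => g x.1) (μ.prod ν) := by
  have hmap : (μ.prod ν).map Prod.fst = μ := by simp [Measure.map_fst_prod]
  exact (integrable_map_measure (by rw [hmap]; exact hg.aestronglyMeasurable)
    measurable_fst.aemeasurable).mp (by rwa [hmap])

lemma aux_integral_fst {𝒳 : Type*} [NormedAddCommGroup 𝒳] [NormedSpace ℝ 𝒳]
    {Ω : Type*} [MeasurableSpace Ω]
    (μ : Measure Ω) (ν : Measure ℝ) [IsProbabilityMeasure ν] [SFinite μ]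
    {g : Ω → 𝒳} (hg : AEStronglyMeasurable g μ) :
    ∫ x : Ω × ℝ, g x.1 ∂(μ.prod ν) = ∫ ω, g ω ∂μ := by
  have hmap : (μ.prod ν).map Prod.fst = μ := by simp [Measure.map_fst_prod]
  conv_rhs => rw [← hmap]
  exact (integral_map measurable_fst.aemeasurable (by rwa [hmap])).symm

lemma aux_setIntegral_fst {𝒳 : Type*} [NormedAddCommGroup 𝒳] [NormedSpace ℝ 𝒳]
    {Ω : Type*} [MeasurableSpace Ω]
    (μ : Measure Ω) (ν : Measure ℝ) [IsProbabilityMeasure ν] [SFinite μ]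
    {g : Ω → 𝒳} (hg : AEStronglyMeasurable g μ) (t : Set Ω) :
    ∫ x in (Prod.fst ⁻¹' t), g x.1 ∂(μ.prod ν) = ∫ ω in t, g ω ∂μ := by
  have h1 : (Prod.fst ⁻¹' t : Set (Ω × ℝ)) = t ×ˢ (univ : Set ℝ) := by
    ext x; simp
  have h2 : (μ.prod ν).restrict (t ×ˢ (univ : Set ℝ)) = (μ.restrict t).prod ν := by
    rw [← Measure.prod_restrict, Measure.restrict_univ]
  rw [h1, h2]
  exact aux_integral_fst (μ.restrict t) ν hg.restrict

lemma aux_condexp_fst {𝒳 : Type*} [NormedAddCommGroup 𝒳] [NormedSpace ℝ 𝒳] [CompleteSpace 𝒳]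
    {Ω : Type*} [m0 : MeasurableSpace Ω] {μ : Measure Ω} [IsProbabilityMeasure μ]
    (ν : Measure ℝ) [IsProbabilityMeasure ν]
    (m : ℕ → MeasurableSpace Ω) (j : ℕ) (hm : m j ≤ m0) {f : Ω → 𝒳} (hf : Integrable f μ) :
    (fun x : Ω × ℝ => (μ[f|m j]) x.1) =ᵐ[μ.prod ν]
      ((μ.prod ν)[(fun x : Ω × ℝ => f x.1) | (m j).comap Prod.fst]) := by
  have hm' : (m j).comap Prod.fst ≤ (inferInstance : MeasurableSpace (Ω × ℝ)) :=
    le_trans (MeasurableSpace.comap_mono hm) measurable_fst.comap_le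
  haveI : SigmaFinite ((μ.prod ν).trim hm') := inferInstance
  refine ae_eq_condExp_of_forall_setIntegral_eq hm' (aux_integrable_fst hf) ?_ ?_ ?_
  · intro s hs _
    obtain ⟨u, hu, rfl⟩ := hs
    have h1 : (Prod.fst ⁻¹' u : Set (Ω × ℝ)) = u ×ˢ (univ : Set ℝ) := by ext x; simp
    rw [IntegrableOn, h1, ← Measure.prod_restrict, Measure.restrict_univ]
    exact aux_integrable_fst integrable_condExp.restrict
  · intro s hs _
    obtain ⟨u, hu, rfl⟩ := hs
    rw [aux_setIntegral_fst μ ν (stronglyMeasurable_condExp.mono hm).aestronglyMeasurable u,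
        aux_setIntegral_fst μ ν hf.aestronglyMeasurable u,
        setIntegral_condExp hm hf hu]
  · exact StronglyMeasurable.aestronglyMeasurable
      (stronglyMeasurable_condExp.comp_measurable (Measurable.of_comap_le le_rfl))

lemma aux_nu_prob : IsProbabilityMeasure (volume.restrict (Set.Ioc (0:ℝ) 1)) := by
  constructor
  rw [Measure.restrict_apply_univ]
  simp

lemma aux_divisible {Ω : Type*} [MeasurableSpace Ω] (μ : Measure Ω) [IsProbabilityMeasure μ] :
    Divisible (μ.prod (volume.restrict (Set.Ioc (0:ℝ) 1))) := by
  haveI := aux_nu_prob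
  set ν := volume.restrict (Set.Ioc (0:ℝ) 1) with hν
  set μ' := μ.prod ν with hμ'
  haveI : IsProbabilityMeasure μ' := by infer_instance
  intro A hA _ c hc0 hc1
  have hsnd : ∀ S : Set ℝ, Prod.snd ⁻¹' S = (univ : Set Ω) ×ˢ S := by
    intro S; ext x; simp
  have hν_le : ∀ s t : ℝ, ν (Set.Ioc s t) ≤ ENNReal.ofReal (t - s) := by
    intro s t
    rw [hν, Measure.restrict_apply measurableSet_Ioc]
    exact le_trans (measure_mono Set.inter_subset_left) (by rw [Real.volume_Ioc])
  have hfinA : μ' A ≠ ⊤ := (measure_lt_top μ' A).ne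
  set G : ℝ → ℝ := fun t => (μ' (A ∩ Prod.snd ⁻¹' (Set.Iic t))).toReal with hG
  have hfin : ∀ t, μ' (A ∩ Prod.snd ⁻¹' (Set.Iic t)) ≠ ⊤ :=
    fun t => (measure_lt_top _ _).ne
  have hmono : Monotone G := by
    intro s t hst
    exact ENNReal.toReal_mono (hfin t)
      (measure_mono (Set.inter_subset_inter_right _ (Set.preimage_mono (Set.Iic_subset_Iic.2 hst))))
  have hlip : ∀ s t : ℝ, s ≤ t → G t - G s ≤ t - s := by
    intro s t hst
    have hsub : A ∩ Prod.snd ⁻¹' (Set.Iic t) ⊆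
        (A ∩ Prod.snd ⁻¹' (Set.Iic s)) ∪ Prod.snd ⁻¹' (Set.Ioc s t) := by
      intro x ⟨hxA, hxt⟩
      by_cases hxs : x.2 ≤ s
      · exact Or.inl ⟨hxA, hxs⟩
      · exact Or.inr ⟨lt_of_not_ge hxs, hxt⟩
    have hmeas : μ' (Prod.snd ⁻¹' (Set.Ioc s t)) ≤ ENNReal.ofReal (t - s) := by
      rw [hsnd, hμ', Measure.prod_prod, measure_univ, one_mul]
      exact hν_le s t
    have h1 : μ' (A ∩ Prod.snd ⁻¹' (Set.Iic t)) ≤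
        μ' (A ∩ Prod.snd ⁻¹' (Set.Iic s)) + ENNReal.ofReal (t - s) :=
      le_trans (measure_mono hsub) (le_trans (measure_union_le _ _) (by gcongr))
    have := ENNReal.toReal_mono (by finiteness) h1
    rw [ENNReal.toReal_add (hfin s) (by finiteness), ENNReal.toReal_ofReal (by linarith)] at this
    simp only [hG]
    linarith
  have hcont : Continuous G := by
    refine (LipschitzWith.of_dist_le_mul (K := 1) (fun s t => ?_)).continuous
    rw [Real.dist_eq, Real.dist_eq, NNReal.coe_one, one_mul]
    rcases le_total s t with hst | hst
    · rw [abs_of_nonpos (by linarith [hmono hst]), abs_of_nonpos (by linarith)]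
      linarith [hlip s t hst]
    · rw [abs_of_nonneg (by linarith [hmono hst]), abs_of_nonneg (by linarith)]
      linarith [hlip t s hst]
  have hG0 : G 0 = 0 := by
    have : μ' (A ∩ Prod.snd ⁻¹' (Set.Iic (0:ℝ))) = 0 := by
      refine measure_mono_null Set.inter_subset_right ?_
      rw [hsnd, hμ', Measure.prod_prod, measure_univ, one_mul, hν,
        Measure.restrict_apply measurableSet_Iic]
      convert measure_empty (μ := (volume : Measure ℝ))
      ext x; simp; intro h1 h2; linarith
    simp [hG, this]
  have hG1 : G 1 = (μ' A).toReal := by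
    have hnull : μ' (A \ Prod.snd ⁻¹' (Set.Iic (1:ℝ))) = 0 := by
      have hsub2 : A \ Prod.snd ⁻¹' (Set.Iic (1:ℝ)) ⊆ Prod.snd ⁻¹' (Set.Ioi (1:ℝ)) := by
        intro x hx
        simp only [Set.mem_diff, Set.mem_preimage, Set.mem_Iic, Set.mem_Ioi] at hx ⊢
        exact lt_of_not_ge hx.2
      refine measure_mono_null hsub2 ?_
      rw [hsnd, hμ', Measure.prod_prod, measure_univ, one_mul, hν,
        Measure.restrict_apply measurableSet_Ioi]
      convert measure_empty (μ := (volume : Measure ℝ))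
      ext x; simp; intro h1 h2; linarith
    have : μ' A = μ' (A ∩ Prod.snd ⁻¹' (Set.Iic (1:ℝ))) := by
      refine le_antisymm ?_ (measure_mono Set.inter_subset_left)
      calc μ' A = μ' ((A ∩ Prod.snd ⁻¹' (Set.Iic (1:ℝ))) ∪ (A \ Prod.snd ⁻¹' (Set.Iic (1:ℝ)))) := by
            rw [Set.inter_union_diff]
        _ ≤ μ' (A ∩ Prod.snd ⁻¹' (Set.Iic (1:ℝ))) + μ' (A \ Prod.snd ⁻¹' (Set.Iic (1:ℝ))) :=
            measure_union_le _ _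
        _ = μ' (A ∩ Prod.snd ⁻¹' (Set.Iic (1:ℝ))) := by rw [hnull, add_zero]
    rw [hG]
    simp only [← this]
  have hmem : c * (μ' A).toReal ∈ Set.Icc (G 0) (G 1) := by
    rw [hG0, hG1]
    constructor
    · positivity
    · nlinarith [ENNReal.toReal_nonneg (a := μ' A)]
  obtain ⟨t, _, hGt⟩ := intermediate_value_Icc (by norm_num : (0:ℝ) ≤ 1) hcont.continuousOn hmem
  refine ⟨A ∩ Prod.snd ⁻¹' (Set.Iic t), hA.inter (measurable_snd measurableSet_Iic),
    Set.inter_subset_left, ?_⟩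
  have : μ' (A ∩ Prod.snd ⁻¹' (Set.Iic t)) = ENNReal.ofReal (c * (μ' A).toReal) := by
    rw [← hGt, hG, ENNReal.ofReal_toReal (hfin t)]
  rw [this, ENNReal.ofReal_mul hc0.le, ENNReal.ofReal_toReal hfinA]

/-- If `𝒳` has `RMF_p` with constant `C` w.r.t. every filtration on every divisible
measure space of total measure one, then it has `RMF_p` with constant `C` w.r.t.
every filtration on every measure space of total measure one. -/
theorem statement11 {𝒳 : Type*} [NormedAddCommGroup 𝒳] [NormedSpace ℝ 𝒳] [CompleteSpace 𝒳]
    (p C : ℝ) (hp1 : 1 < p)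
    (h : ∀ (Ω : Type u) (m0 : MeasurableSpace Ω) (μ : Measure Ω), IsProbabilityMeasure μ →
      Divisible μ → ∀ m : ℕ → MeasurableSpace Ω, Monotone m → (∀ j, m j ≤ m0) →
        RMFpWith 𝒳 p C μ m) :
    ∀ (Ω : Type u) (m0 : MeasurableSpace Ω) (μ : Measure Ω), IsProbabilityMeasure μ →
      ∀ m : ℕ → MeasurableSpace Ω, Monotone m → (∀ j, m j ≤ m0) →
        RMFpWith 𝒳 p C μ m := by
  intro Ω m0 μ hprob m hmono hle f hf
  haveI := aux_nu_prob
  set ν := volume.restrict (Set.Ioc (0:ℝ) 1) with hν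
  haveI : IsProbabilityMeasure (μ.prod ν) := by infer_instance
  have hp0 : (0:ℝ) < p := lt_trans one_pos hp1
  have hq0 : ENNReal.ofReal p ≠ 0 := by
    simp only [ne_eq, ENNReal.ofReal_eq_zero, not_le]
    exact hp0
  have hqt : ENNReal.ofReal p ≠ ⊤ := ENNReal.ofReal_ne_top
  have hmap : (μ.prod ν).map Prod.fst = μ := by simp [Measure.map_fst_prod]
  have help : eLpNorm (fun x : Ω × ℝ => f x.1) (ENNReal.ofReal p) (μ.prod ν)
      = eLpNorm f (ENNReal.ofReal p) μ := by
    rw [eLpNorm_eq_lintegral_rpow_enorm_toReal hq0 hqt, eLpNorm_eq_lintegral_rpow_enorm_toReal hq0 hqt]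
    congr 1
    exact aux_lintegral_fst μ ν (fun ω => ‖f ω‖ₑ ^ (ENNReal.ofReal p).toReal)
  have hFm : AEStronglyMeasurable (fun x : Ω × ℝ => f x.1) (μ.prod ν) := by
    have : AEStronglyMeasurable f ((μ.prod ν).map Prod.fst) := by
      rw [hmap]; exact hf.aestronglyMeasurable
    exact this.comp_aemeasurable measurable_fst.aemeasurable
  have hFLp : MemLp (fun x : Ω × ℝ => f x.1) (ENNReal.ofReal p) (μ.prod ν) := by
    refine ⟨hFm, ?_⟩
    rw [help]
    exact hf.2
  have hInt : Integrable f μ := hf.integrable (ENNReal.one_le_ofReal.mpr hp1.le)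
  have key := h (Ω × ℝ) inferInstance (μ.prod ν) inferInstance (aux_divisible μ)
    (fun j => (m j).comap Prod.fst)
    (fun i j hij => MeasurableSpace.comap_mono (hmono hij))
    (fun j => le_trans (MeasurableSpace.comap_mono (hle j)) measurable_fst.comap_le)
    (fun x : Ω × ℝ => f x.1) hFLp
  have hcond : ∀ᵐ x ∂(μ.prod ν), ∀ j : ℕ,
      ((μ.prod ν)[(fun x : Ω × ℝ => f x.1)| (m j).comap Prod.fst]) x = (μ[f| m j]) x.1 := by
    rw [ae_all_iff]
    intro j
    filter_upwards [aux_condexp_fst ν m j (hle j) hInt] with x hx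
    exact hx.symm
  have hMR : ∀ᵐ x ∂(μ.prod ν),
      MRfilt (μ.prod ν) (fun j => (m j).comap Prod.fst) (fun x : Ω × ℝ => f x.1) x
        = MRfilt μ m f x.1 := by
    filter_upwards [hcond] with x hx
    unfold MRfilt
    congr 1
    ext y
    constructor
    · rintro ⟨j, rfl⟩
      refine ⟨j, ?_⟩
      exact hx j
    · rintro ⟨j, rfl⟩
      refine ⟨j, ?_⟩
      exact (hx j).symm
  calc (∫⁻ ξ, MRfilt μ m f ξ ^ p ∂μ) ^ (1/p)
      = (∫⁻ x, MRfilt (μ.prod ν) (fun j => (m j).comap Prod.fst)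
          (fun x : Ω × ℝ => f x.1) x ^ p ∂(μ.prod ν)) ^ (1/p) := by
        rw [← aux_lintegral_fst μ ν (fun ξ => MRfilt μ m f ξ ^ p)]
        congr 1
        refine lintegral_congr_ae (hMR.mono fun x hx => ?_)
        exact congrArg (fun z : ℝ≥0∞ => z ^ p) hx.symm
    _ ≤ ENNReal.ofReal C * eLpNorm (fun x : Ω × ℝ => f x.1) (ENNReal.ofReal p) (μ.prod ν) := key
    _ = ENNReal.ofReal C * eLpNorm f (ENNReal.ofReal p) μ := by rw [help]


end RMF
end
end
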